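/- arXiv:2503.22630 — 11 statements merged into one kernel-verified Lean document; each statement's English description precedes it below -/
import Mathlib

section
/- Assuming the reals can be well-ordered, there exists a subset K of ℝ/ℤ that is independent (its elements have no non-trivial solution to any linear equation with integer coefficients, i.e., K is linearly independent over ℤ viewing ℝ/ℤ as a ℤ-module) and has outer Lebesgue measure equal to 1. -/
/-!
Enumerate the uncountable closed subsets of `ℝ/ℤ` along the initial well-order of their
cardinality, which is at most `𝔠`. By transfinite recursion, pick in the `i`-th set a point no
nonzero multiple of which lies in the subgroup generated by the earlier points: this excludes
fewer than `𝔠` points (the torsion of `ℝ/ℤ` is finite in each order), while an uncountable closed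
set has `𝔠` points. The chosen points are `ℤ`-independent, and since they meet every closed set of
positive measure, inner regularity gives them full outer measure.
-/

open Finset MeasureTheory Pointwise

def IsTrivialSol {G : Type*} [AddCommGroup G] {n : ℕ} (m : Fin n → ℤ) (x : Fin n → G) : Prop :=
  ∃ p : Fin n → Fin n, (∀ i j, p i = p j → x i = x j) ∧
    ∀ k, ∑ j ∈ Finset.univ.filter (fun j => p j = k), m j • x j = 0

/-- A subset of an abelian group is *independent* if it has no non-trivial solution to any
linear equation with integer coefficients. -/
def IndependentSet {G : Type*} [AddCommGroup G] (K : Set G) : Prop :=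
  ∀ (n : ℕ) (m : Fin n → ℤ) (x : Fin n → G),
    (∀ i, x i ∈ K) → ∑ i, m i • x i = 0 → IsTrivialSol m x

open Cardinal Submodule

universe u

section Independence

variable {G : Type*} [AddCommGroup G]

theorem isTrivialSol_of_sum_fiber_eq_zero [DecidableEq G] {n : ℕ} {m : Fin n → ℤ}
    {x : Fin n → G} (h : ∀ i, ∑ j ∈ Finset.univ.filter (fun j => x j = x i), m j • x j = 0) :
    IsTrivialSol m x := by
  rcases isEmpty_or_nonempty (Fin n) with hn | hn
  · exact ⟨id, fun i => isEmptyElim i, fun k => isEmptyElim k⟩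
  set p : Fin n → Fin n := fun i => Function.invFun x (x i)
  have hxp : ∀ i, x (p i) = x i := fun i => Function.invFun_eq ⟨i, rfl⟩
  refine ⟨p, fun i j hij => by rw [← hxp i, hij, hxp j], fun k => ?_⟩
  by_cases hk : ∃ i, p i = k
  · obtain ⟨i, rfl⟩ := hk
    have hfiber : univ.filter (fun j => p j = p i) = univ.filter (fun j => x j = x i) := by
      ext j
      simp only [mem_filter, mem_univ, true_and]
      exact ⟨fun hj => by rw [← hxp j, hj, hxp i], fun hj => by simp only [p, hj]⟩
    rw [hfiber]
    exact h i
  · push Not at hk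
    exact sum_eq_zero fun j hj => absurd (mem_filter.1 hj).2 (hk j)

theorem LinearIndepOn.independentSet {K : Set G} (hK : LinearIndepOn ℤ id K) :
    IndependentSet K := by
  classical
  intro n m x hxK hsum
  refine isTrivialSol_of_sum_fiber_eq_zero fun i => ?_
  set c : G → ℤ := fun v => ∑ j ∈ univ.filter (fun j => x j = v), m j
  have hfiber : ∀ v, ∑ j ∈ univ.filter (fun j => x j = v), m j • x j = c v • v := fun v => by
    rw [sum_smul]
    exact sum_congr rfl fun j hj => by rw [(mem_filter.1 hj).2]
  have hc : ∑ v ∈ univ.image x, c v • v = 0 := by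
    rw [← hsum, ← sum_fiberwise_of_maps_to (fun j _ => mem_image_of_mem x (mem_univ j))]
    exact sum_congr rfl fun v _ => (hfiber v).symm
  have hcx : c (x i) = 0 := linearIndepOn_iff'.1 hK _ c
    (by rintro _ hv; obtain ⟨j, -, rfl⟩ := mem_image.1 hv; exact hxK j) hc _
    (mem_image_of_mem x (mem_univ i))
  rw [hfiber, hcx, zero_smul]

theorem linearIndependent_of_smul_notMem_span_Iio {ι R M : Type*} [LinearOrder ι] [Ring R]
    [AddCommGroup M] [Module R M] {v : ι → M}
    (hv : ∀ i (r : R), r ≠ 0 → r • v i ∉ span R (v '' Set.Iio i)) : LinearIndependent R v := by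
  classical
  refine linearIndependent_iff'.2 fun s => ?_
  induction s using Finset.induction_on_max with
  | empty => simp
  | insert a s hlt ih =>
    intro c hsum i hi
    have has : a ∉ s := fun h => lt_irrefl a (hlt a h)
    rw [sum_insert has] at hsum
    have hmem : ∑ j ∈ s, c j • v j ∈ span R (v '' Set.Iio a) :=
      sum_mem fun j hj => smul_mem _ _ (subset_span (Set.mem_image_of_mem v (hlt j hj)))
    have hca : c a = 0 := by
      by_contra hca
      refine hv a (c a) hca ?_
      rw [eq_neg_of_add_eq_zero_left hsum]
      exact neg_mem hmem
    rcases mem_insert.1 hi with rfl | hi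
    · exact hca
    · exact ih c (by rwa [hca, zero_smul, zero_add] at hsum) i hi

end Independence

open Set

theorem exists_forall_apply_mem_image_Iio {ι X : Type*} [Preorder ι] [WellFoundedLT ι]
    (S : ι → Set X → Set X) (hS : ∀ i (f : Set.Iio i → X), (S i (range f)).Nonempty) :
    ∃ g : ι → X, ∀ i, g i ∈ S i (g '' Set.Iio i) := by
  choose c hc using hS
  refine ⟨wellFounded_lt.fix fun i IH => c i fun j => IH j j.2, fun i => ?_⟩
  rw [wellFounded_lt.fix_eq, image_eq_range]
  exact hc _ _

theorem mk_setOf_isClosed_le_continuum (X : Type u) [TopologicalSpace X]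
    [SecondCountableTopology X] : #{C : Set X | IsClosed C} ≤ 𝔠 := by
  obtain ⟨b, hbc, -, hb⟩ := TopologicalSpace.exists_countable_basis X
  have hsub : {C : Set X | IsClosed C} ⊆ {C | MeasurableSet[.generateFrom b] C} := fun C hC => by
    rw [← hb.borel_eq_generateFrom]
    exact (MeasurableSpace.measurableSet_generateFrom hC.isOpen_compl).of_compl
  exact (mk_le_mk_of_subset hsub).trans
    (MeasurableSpace.cardinal_measurableSet_le_continuum (hbc.le_aleph0.trans aleph0_le_continuum))

theorem IsClosed.continuum_le_mk {X : Type u} [TopologicalSpace X] [PolishSpace X] {C : Set X}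
    (hC : IsClosed C) (hunc : ¬C.Countable) : 𝔠 ≤ #C := by
  obtain ⟨f, hfC, -, hf⟩ := hC.exists_nat_bool_injection_of_not_countable hunc
  have := lift_mk_le_lift_mk_of_injective (f := fun z => (⟨f z, hfC ⟨z, rfl⟩⟩ : C))
    fun a b hab => hf (congrArg Subtype.val hab)
  simpa using this

theorem mk_span_int_le {M : Type u} [AddCommGroup M] (s : Set M) : #(span ℤ s) ≤ max #s ℵ₀ := by
  rcases s.eq_empty_or_nonempty with rfl | ⟨x, hx⟩
  · simp
  have : Nonempty s := ⟨⟨x, hx⟩⟩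
  have := mk_range_le_lift (f := Finsupp.linearCombination ℤ (Subtype.val : s → M))
  rw [← LinearMap.coe_range, ← Finsupp.span_eq_range_linearCombination,
    mk_finsupp_lift_of_infinite'] at this
  simpa using this

theorem Set.Countable.setOf_zsmul_eq {G : Type*} [AddCommGroup G] {n : ℤ}
    (htors : {x : G | n • x = 0}.Countable) (y : G) : {x : G | n • x = y}.Countable := by
  rcases eq_empty_or_nonempty {x : G | n • x = y} with he | ⟨x₀, hx₀⟩
  · exact he ▸ countable_empty
  have hsub : {x : G | n • x = y} ⊆ (x₀ + ·) '' {x | n • x = 0} := fun x hx =>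
    ⟨x - x₀, by simp_all [smul_sub], add_sub_cancel x₀ x⟩
  exact (htors.image _).mono hsub

def intDependent {G : Type*} [AddCommGroup G] (A : Set G) : Set G :=
  {x | ∃ n : ℤ, n ≠ 0 ∧ n • x ∈ span ℤ A}

theorem mk_intDependent_lt_continuum {G : Type u} [AddCommGroup G]
    (htors : ∀ n : ℤ, n ≠ 0 → {x : G | n • x = 0}.Countable) {A : Set G} (hA : #A < 𝔠) :
    #(intDependent A) < 𝔠 := by
  set F : G → Set G := fun y => {x | ∃ n : ℤ, n ≠ 0 ∧ n • x = y}
  have hsub : intDependent A ⊆ ⋃ y : span ℤ A, F y :=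
    fun x ⟨n, hn, hx⟩ => mem_iUnion.2 ⟨⟨_, hx⟩, n, hn, rfl⟩
  have hF : ∀ y, (F y).Countable := fun y => by
    have : F y = ⋃ n : {n : ℤ // n ≠ 0}, {x | n.1 • x = y} := by ext; simp [F]
    exact this ▸ countable_iUnion fun n => (htors n n.2).setOf_zsmul_eq y
  refine ((mk_le_mk_of_subset hsub).trans (mk_iUnion_le _)).trans_lt
    (mul_lt_of_lt aleph0_le_continuum ?_ ?_)
  · exact (mk_span_int_le A).trans_lt (max_lt hA aleph0_lt_continuum)
  · exact (ciSup_le' fun y : span ℤ A => (hF y).le_aleph0).trans_lt aleph0_lt_continuum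

theorem exists_linearIndepOn_int_inter_nonempty_of_not_countable {G : Type u} [AddCommGroup G]
    [TopologicalSpace G] [PolishSpace G]
    (htors : ∀ n : ℤ, n ≠ 0 → {x : G | n • x = 0}.Countable) :
    ∃ K : Set G, LinearIndepOn ℤ id K ∧ ∀ C, IsClosed C → ¬C.Countable → (C ∩ K).Nonempty := by
  set S := {C : Set G | IsClosed C ∧ ¬C.Countable}
  obtain ⟨e⟩ : Nonempty ((#S).ord.ToType ≃ S) := Cardinal.eq.1 (mk_ord_toType #S)
  have hS : #S ≤ 𝔠 :=
    (mk_le_mk_of_subset fun C hC => hC.1).trans (mk_setOf_isClosed_le_continuum G)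
  obtain ⟨g, hg⟩ := exists_forall_apply_mem_image_Iio (fun i A => (e i : Set G) \ intDependent A)
    fun i f => by
      have hf : #(range f) < 𝔠 :=
        mk_range_le.trans_lt (((by simpa using mk_Iio_lt i) : #(Set.Iio i) < #S).trans_le hS)
      refine nonempty_of_not_subset fun hsub => ?_
      exact (mk_intDependent_lt_continuum htors hf).not_ge
        (((e i).2.1.continuum_le_mk (e i).2.2).trans (mk_le_mk_of_subset hsub))
  refine ⟨range g, (linearIndependent_of_smul_notMem_span_Iio fun i n hn hmem =>
    (hg i).2 ⟨n, hn, hmem⟩).linearIndepOn_id, fun C hC hunc => ?_⟩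
  obtain ⟨i, hi⟩ := e.surjective ⟨C, hC, hunc⟩
  exact ⟨g i, by simpa [hi] using (hg i).1, i, rfl⟩

theorem measure_eq_measure_univ_of_forall_isClosed_inter_nonempty {X : Type*}
    [TopologicalSpace X] [MeasurableSpace X] {μ : Measure X} [IsFiniteMeasure μ] [μ.WeaklyRegular]
    {K : Set X} (hK : ∀ C, IsClosed C → 0 < μ C → (C ∩ K).Nonempty) : μ K = μ univ := by
  set t := toMeasurable μ K
  have ht : MeasurableSet t := measurableSet_toMeasurable μ K
  have hnull : μ tᶜ = 0 := by
    by_contra hpos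
    obtain ⟨C, hCt, hC, hCpos⟩ :=
      ht.compl.exists_lt_isClosed_of_ne_top (measure_ne_top μ _) (pos_iff_ne_zero.2 hpos)
    obtain ⟨x, hxC, hxK⟩ := hK C hC hCpos
    exact hCt hxC (subset_toMeasurable μ K hxK)
  rw [← measure_toMeasurable, ← measure_add_measure_compl ht, hnull, add_zero]

-- Through `PerfectSpace`, this makes Haar measure on `ℝ/ℤ` vanish on countable sets.
instance : Nontrivial UnitAddCircle := by
  refine ⟨⟨((1 / 2 : ℝ) : UnitAddCircle), 0, fun h => ?_⟩⟩
  have := AddCircle.addOrderOf_period_div (p := (1 : ℝ)) (n := 2) two_pos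
  rw [Nat.cast_ofNat, h, addOrderOf_zero] at this
  norm_num at this

/-- There exists an independent subset `K` of `ℝ/ℤ` of outer Lebesgue measure `1`. -/
theorem exists_independent_full_outer_measure :
    ∃ K : Set UnitAddCircle, IndependentSet K ∧ volume K = 1 := by
  obtain ⟨K, hK, hmeet⟩ :=
    exists_linearIndepOn_int_inter_nonempty_of_not_countable (G := UnitAddCircle) fun n hn =>
      (AddCircle.finite_torsion_of_isSMulRegular_int _ n (.of_ne_zero hn)).countable
  refine ⟨K, hK.independentSet, ?_⟩
  rw [measure_eq_measure_univ_of_forall_isClosed_inter_nonempty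
    fun C hC hpos => hmeet C hC fun hc => hpos.ne' (hc.measure_zero _), UnitAddCircle.measure_univ]
end

section
/- Let E ⊆ ℝ be Lebesgue measurable with positive measure. Then there exist nonzero integers m, n and distinct elements x, y ∈ E with mx + ny = 0. -/
/-!
Remove `0` from `E` and cut it down to a bounded part `G` of positive measure. The dilates
`qᵢ • G` by the rationals `qᵢ = (i + 2) / (i + 1) ∈ [1, 2]` all lie in one ball and each has
measure at least `λ G`, so infinitely many of them cannot be pairwise disjoint. A common point
`qᵢ x = qⱼ y` with `x, y ∈ G` is an integer relation `m x + n y = 0`, and `x ≠ y` because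
`m + n = j - i ≠ 0` and `x ≠ 0`.
-/

open MeasureTheory Set Pointwise Bornology Metric

theorem exists_pos_measure_inter_closedBall {α : Type*} [PseudoMetricSpace α] [MeasurableSpace α]
    {μ : Measure α} {s : Set α} (hs : μ s ≠ 0) (x : α) : ∃ n : ℕ, 0 < μ (s ∩ closedBall x n) :=
  exists_measure_pos_of_not_measure_iUnion_null (by rwa [iUnion_inter_closedBall_nat])

section

variable {F : Type*} [NormedAddCommGroup F] [NormedSpace ℝ F] [MeasurableSpace F] [BorelSpace F]
  [FiniteDimensional ℝ F] (μ : Measure F) [μ.IsAddHaarMeasure]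

theorem measure_le_measure_smul {c : ℝ} (hc : 1 ≤ c) (s : Set F) : μ s ≤ μ (c • s) := by
  rw [Measure.addHaar_smul, abs_of_nonneg (by positivity)]
  exact le_mul_of_one_le_left' (ENNReal.one_le_ofReal.2 (one_le_pow₀ hc))

theorem exists_smul_inter_smul_nonempty {ι : Type*} [Infinite ι] {s : Set F}
    (hs : MeasurableSet s) (hbdd : IsBounded s) (hs0 : μ s ≠ 0) {c : ι → ℝ} {K : ℝ}
    (hc : ∀ i, c i ∈ Icc 1 K) : ∃ i j, i ≠ j ∧ (c i • s ∩ c j • s).Nonempty := by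
  obtain ⟨R, hR, hsR⟩ := hbdd.subset_closedBall_lt 0 0
  have hsub : ∀ i, c i • s ⊆ closedBall 0 (K * R) := fun i => by
    refine (smul_set_mono hsR).trans ?_
    rw [smul_closedBall _ _ hR.le, smul_zero, Real.norm_of_nonneg (by linarith [(hc i).1])]
    exact closedBall_subset_closedBall (by nlinarith [(hc i).2])
  apply exists_nonempty_inter_of_measure_univ_lt_tsum_measure (μ.restrict (closedBall 0 (K * R)))
    fun i => (hs.const_smul₀ (c i)).nullMeasurableSet
  calc μ.restrict (closedBall 0 (K * R)) univ
      < ⊤ := by simpa using measure_closedBall_lt_top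
    _ = ∑' _ : ι, μ s := (ENNReal.tsum_const_eq_top_of_ne_zero hs0).symm
    _ ≤ ∑' i, μ.restrict (closedBall 0 (K * R)) (c i • s) := by
      refine ENNReal.tsum_le_tsum fun i => ?_
      rw [Measure.restrict_eq_self _ (hsub i)]
      exact measure_le_measure_smul μ (hc i).1 s

end

noncomputable def scaleFactor (i : ℕ) : ℝ := (i + 2) / (i + 1)

theorem scaleFactor_mem_Icc (i : ℕ) : scaleFactor i ∈ Icc 1 2 := by
  have hi : (0 : ℝ) < i + 1 := by positivity
  rw [scaleFactor, mem_Icc, one_le_div hi, div_le_iff₀ hi]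
  constructor <;> linarith [(i.cast_nonneg : (0 : ℝ) ≤ i)]

theorem linear_relation_of_scaleFactor_mul_eq {i j : ℕ} {x y : ℝ}
    (h : scaleFactor i * x = scaleFactor j * y) :
    (((i + 2) * (j + 1) : ℤ) : ℝ) * x + ((-((j + 2) * (i + 1)) : ℤ) : ℝ) * y = 0 := by
  rw [scaleFactor, scaleFactor, div_mul_eq_mul_div, div_mul_eq_mul_div,
    div_eq_div_iff (by positivity) (by positivity)] at h
  push_cast
  linarith

/-- A measurable set of reals of positive Lebesgue measure contains a non-trivial solution
to a homogeneous linear equation `m x + n y = 0` of order `2`. -/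
theorem exists_linear_relation_of_pos_measure
    (E : Set ℝ) (hE : MeasurableSet E) (hpos : 0 < volume E) :
    ∃ m n : ℤ, m ≠ 0 ∧ n ≠ 0 ∧ ∃ x ∈ E, ∃ y ∈ E, x ≠ y ∧ (m : ℝ) * x + (n : ℝ) * y = 0 := by
  have hE0 : volume (E \ {0}) ≠ 0 := by
    rw [measure_sdiff_null (measure_singleton 0)]
    exact hpos.ne'
  obtain ⟨R, hR⟩ := exists_pos_measure_inter_closedBall hE0 0
  obtain ⟨i, j, hij, -, ⟨x, ⟨⟨hxE, hx0 : x ≠ 0⟩, -⟩, rfl⟩, ⟨y, ⟨⟨hyE, -⟩, -⟩, hxy⟩⟩ :=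
    exists_smul_inter_smul_nonempty volume
      ((hE.diff (measurableSet_singleton 0)).inter measurableSet_closedBall)
      (isBounded_closedBall.subset inter_subset_right) hR.ne' scaleFactor_mem_Icc
  have hrel := linear_relation_of_scaleFactor_mul_eq hxy.symm
  refine ⟨_, _, by positivity, neg_ne_zero.2 (by positivity), x, hxE, y, hyE, ?_, hrel⟩
  rintro rfl
  push_cast at hrel
  have hsum : ((j : ℝ) - i) * x = 0 := by linarith
  simp [sub_eq_zero, hx0, Ne.symm hij] at hsum
end

section
/- Let E be a subset of ℝ/ℤ such that E + E has positive outer Lebesgue measure and such that E has no non-trivial solutions to linear equations with integer coefficients of order 4 (in particular no non-trivial solution to mx₁ + mx₂ + nx₃ + nx₄ = 0 with m, n nonzero). Then E is not Lebesgue measurable. -/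
/-!
Let `E'` be `E` with its (countably many) torsion points removed. For `a, b, c, d ∈ E'` and
`N ≠ 0`, the relation `N • (a + b) = N • (c + d)` is an order-four equation, and a trivial
solution with torsion-free entries must match `{a, b}` with `{c, d}`. So addition is injective on
unordered pairs from `E'`; by Lusin–Souslin, `E' + E'` is measurable if `E` is, and it has
positive measure (it contains `E + E` up to a null set when `E` is null, and a translate of `E'`
otherwise). By Steinhaus, `(E' + E') - (E' + E')` is a neighbourhood of `0`, so it contains a
nonzero torsion point `a + b - (c + d)`, which the injectivity up to torsion rules out.
-/

open Finset MeasureTheory Pointwise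

open Filter Topology

section TrivialSolutions

variable {G : Type*} [AddCommGroup G]

theorem IsTrivialSol.exists_blocks_coeff_sum_eq_zero {n : ℕ} {m : Fin n → ℤ} {x : Fin n → G}
    (h : IsTrivialSol m x) (hx : ∀ i, ¬IsOfFinAddOrder (x i)) :
    ∃ p : Fin n → Fin n, (∀ i j, p i = p j → x i = x j) ∧
      ∀ i, ∑ j ∈ univ.filter (fun j => p j = p i), m j = 0 := by
  obtain ⟨p, hpx, hsum⟩ := h
  refine ⟨p, hpx, fun i => ?_⟩
  by_contra hne
  refine hx i (isOfFinAddOrder_iff_zsmul_eq_zero.2 ⟨_, hne, ?_⟩)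
  rw [Finset.sum_smul, ← hsum (p i)]
  exact Finset.sum_congr rfl fun j hj => by rw [hpx j i (Finset.mem_filter.1 hj).2]

theorem IsTrivialSol.eq_and_eq_or_eq_and_eq {N : ℤ} (hN : N ≠ 0) {x : Fin 4 → G}
    (h : IsTrivialSol ![N, N, -N, -N] x) (hx : ∀ i, ¬IsOfFinAddOrder (x i)) :
    x 0 = x 2 ∧ x 1 = x 3 ∨ x 0 = x 3 ∧ x 1 = x 2 := by
  obtain ⟨p, hpx, hp⟩ := h.exists_blocks_coeff_sum_eq_zero hx
  have h0 := hp 0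
  have h1 := hp 1
  simp only [Finset.sum_filter, Fin.sum_univ_four, Matrix.cons_val] at h0 h1
  grind

theorem eq_and_eq_or_eq_and_eq_of_zsmul_add_eq {E : Set G}
    (hfree : ∀ (m : Fin 4 → ℤ) (x : Fin 4 → G), (∀ i, m i ≠ 0) →
      (∀ i, x i ∈ E) → ∑ i, m i • x i = 0 → IsTrivialSol m x) {a b c d : G}
    (ha : a ∈ E \ AddCommGroup.torsion G) (hb : b ∈ E \ AddCommGroup.torsion G)
    (hc : c ∈ E \ AddCommGroup.torsion G) (hd : d ∈ E \ AddCommGroup.torsion G)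
    {N : ℤ} (hN : N ≠ 0) (h : N • (a + b) = N • (c + d)) :
    a = c ∧ b = d ∨ a = d ∧ b = c := by
  have hsol : IsTrivialSol ![N, N, -N, -N] ![a, b, c, d] := by
    refine hfree _ _ (fun i => ?_) (fun i => ?_) ?_
    · fin_cases i <;> simpa
    · fin_cases i <;> simp [ha.1, hb.1, hc.1, hd.1]
    · simp only [Fin.sum_univ_four, smul_add] at h ⊢
      simp [h]
  exact hsol.eq_and_eq_or_eq_and_eq hN fun i => by fin_cases i; exacts [ha.2, hb.2, hc.2, hd.2]

end TrivialSolutions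

theorem MeasurableSet.add_self_of_sidon {G : Type*} [AddCommGroup G] [TopologicalSpace G]
    [ContinuousAdd G] [PolishSpace G] [MeasurableSpace G] [BorelSpace G] {S : Set G}
    (hS : MeasurableSet S)
    (hsidon : ∀ a ∈ S, ∀ b ∈ S, ∀ c ∈ S, ∀ d ∈ S,
      a + b = c + d → a = c ∧ b = d ∨ a = d ∧ b = c) :
    MeasurableSet (S + S) := by
  obtain ⟨ρ, hρ⟩ := exists_measurableEmbedding_real G
  let P : Set (G × G) := S ×ˢ S ∩ {z | ρ z.1 ≤ ρ z.2}
  have hP : MeasurableSet P := (hS.prod hS).inter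
    (measurableSet_le (hρ.measurable.comp measurable_fst) (hρ.measurable.comp measurable_snd))
  have himage : (fun z : G × G => z.1 + z.2) '' P = S + S := by
    refine Set.Subset.antisymm ?_ ?_
    · rintro _ ⟨z, ⟨⟨h1, h2⟩, -⟩, rfl⟩
      exact Set.add_mem_add h1 h2
    · rintro _ ⟨a, ha, b, hb, rfl⟩
      rcases le_total (ρ a) (ρ b) with hab | hba
      · exact ⟨(a, b), ⟨⟨ha, hb⟩, hab⟩, rfl⟩
      · exact ⟨(b, a), ⟨⟨hb, ha⟩, hba⟩, add_comm b a⟩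
  have hinj : Set.InjOn (fun z : G × G => z.1 + z.2) P := by
    rintro ⟨a, b⟩ ⟨⟨ha, hb⟩, hab⟩ ⟨c, d⟩ ⟨⟨hc, hd⟩, hcd⟩ h
    rcases hsidon a ha b hb c hc d hd h with ⟨rfl, rfl⟩ | ⟨rfl, rfl⟩
    · rfl
    · have : a = b := hρ.injective (le_antisymm hab hcd)
      subst this
      rfl
  rw [← himage]
  exact hP.image_of_continuousOn_injOn continuous_add.continuousOn hinj

theorem measure_diff_add_diff_pos {G : Type*} [AddCommGroup G] [MeasurableSpace G]
    [MeasurableAdd G] (μ : Measure G) [μ.IsAddLeftInvariant] {E T : Set G} (hT : T.Countable)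
    (hTμ : μ T = 0) (hE : 0 < μ (E + E)) : 0 < μ (E \ T + E \ T) := by
  by_cases hE0 : μ E = 0
  · have hcover : E + E ⊆ (E \ T + E \ T) ∪ (T + E) := by
      intro x hx
      obtain ⟨a, ha, b, hb, rfl⟩ := Set.mem_add.1 hx
      by_cases haT : a ∈ T
      · exact Or.inr (Set.add_mem_add haT hb)
      by_cases hbT : b ∈ T
      · rw [add_comm a b]
        exact Or.inr (Set.add_mem_add hbT ha)
      exact Or.inl (Set.add_mem_add ⟨ha, haT⟩ ⟨hb, hbT⟩)
    have hnull : μ (T + E) = 0 := by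
      change μ (T +ᵥ E) = 0
      rw [← Set.iUnion_vadd_set, measure_biUnion_null_iff hT]
      exact fun τ _ => by rw [measure_vadd, hE0]
    exact hE.trans_le ((measure_mono hcover).trans
      ((measure_union_le _ _).trans (by rw [hnull, add_zero])))
  · have hpos : 0 < μ (E \ T) := by
      rw [measure_sdiff_null hTμ]
      exact pos_iff_ne_zero.2 hE0
    obtain ⟨u, hu⟩ := nonempty_of_measure_ne_zero hpos.ne'
    calc 0 < μ (E \ T) := hpos
      _ = μ (u +ᵥ (E \ T)) := (measure_vadd μ u _).symm
      _ ≤ μ (E \ T + E \ T) := measure_mono (Set.vadd_set_subset_add hu)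

namespace AddCircle

variable {T : ℝ}

theorem countable_torsion : (AddCommGroup.torsion (AddCircle T) : Set (AddCircle T)).Countable := by
  refine (Set.countable_iUnion fun n : ℕ => (finite_torsion T n.succ_pos).countable).mono ?_
  intro x hx
  obtain ⟨n, hn, hnx⟩ := isOfFinAddOrder_iff_nsmul_eq_zero.1 hx
  exact Set.mem_iUnion.2 ⟨n - 1, by simpa [Nat.sub_add_cancel hn] using hnx⟩

variable [Fact (0 < T)]

theorem frequently_nhds_zero_ne_zero_and_isOfFinAddOrder :
    ∃ᶠ x in 𝓝 (0 : AddCircle T), x ≠ 0 ∧ IsOfFinAddOrder x := by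
  let u : ℕ → AddCircle T := fun n => ((T / (n + 2 : ℕ) : ℝ) : AddCircle T)
  have hu : Tendsto u atTop (𝓝 0) := by
    have : Tendsto (fun n : ℕ => T / (n + 2 : ℕ)) atTop (𝓝 0) :=
      (tendsto_const_div_atTop_nhds_zero_nat T).comp (tendsto_add_atTop_nat 2)
    exact ((AddCircle.continuous_mk' T).tendsto 0).comp this
  have horder : ∀ n, addOrderOf (u n) = n + 2 := fun n => addOrderOf_period_div (by omega)
  refine hu.frequently (Frequently.of_forall fun n => ⟨fun h => ?_, ?_⟩)
  · have := horder n
    rw [h, addOrderOf_zero] at this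
    omega
  · exact addOrderOf_pos_iff.1 (by rw [horder n]; omega)

-- Makes `volume` atomless, through `IsAddHaarMeasure.nullSingletonClass`.
instance : (𝓝[≠] (0 : AddCircle T)).NeBot :=
  frequently_iff_neBot.1 (frequently_nhds_zero_ne_zero_and_isOfFinAddOrder.mono fun _ h => h.1)

theorem exists_mem_sub_ne_zero_isOfFinAddOrder {B : Set (AddCircle T)} (hB : MeasurableSet B)
    (hpos : 0 < volume B) : ∃ x ∈ B - B, x ≠ 0 ∧ IsOfFinAddOrder x :=
  (frequently_nhds_zero_ne_zero_and_isOfFinAddOrder.and_eventually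
    (Measure.sub_mem_nhds_zero_of_addHaar_pos volume B hB hpos)).exists.imp
      fun _ h => ⟨h.2, h.1⟩

end AddCircle

/-- If `E ⊆ ℝ/ℤ` is such that `E + E` has positive outer Lebesgue measure and `E` has no
non-trivial solution to any linear equation of order `4`, then `E` is not Lebesgue
measurable. -/
theorem not_measurable_of_order_four_free
    (E : Set UnitAddCircle)
    (hsum : 0 < volume (E + E))
    (hfree : ∀ (m : Fin 4 → ℤ) (x : Fin 4 → UnitAddCircle), (∀ i, m i ≠ 0) →
      (∀ i, x i ∈ E) → ∑ i, m i • x i = 0 → IsTrivialSol m x) :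
    ¬ MeasurableSet E := by
  intro hE
  set E' := E \ (AddCommGroup.torsion UnitAddCircle : Set UnitAddCircle)
  have hsidon : ∀ a ∈ E', ∀ b ∈ E', ∀ c ∈ E', ∀ d ∈ E',
      a + b = c + d → a = c ∧ b = d ∨ a = d ∧ b = c := fun a ha b hb c hc d hd h =>
    eq_and_eq_or_eq_and_eq_of_zsmul_add_eq hfree ha hb hc hd one_ne_zero
      (by rw [one_zsmul, one_zsmul, h])
  have hmeas : MeasurableSet (E' + E') :=
    (hE.diff AddCircle.countable_torsion.measurableSet).add_self_of_sidon hsidon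
  have hpos : 0 < volume (E' + E') := measure_diff_add_diff_pos volume
    AddCircle.countable_torsion (AddCircle.countable_torsion.measure_zero _) hsum
  obtain ⟨_, ⟨_, ⟨a, ha, b, hb, rfl⟩, _, ⟨c, hc, d, hd, rfl⟩, rfl⟩, hne, htors⟩ :=
    AddCircle.exists_mem_sub_ne_zero_isOfFinAddOrder hmeas hpos
  obtain ⟨N, hN, hNx⟩ := isOfFinAddOrder_iff_zsmul_eq_zero.1 htors
  rcases eq_and_eq_or_eq_and_eq_of_zsmul_add_eq hfree ha hb hc hd hN
    (by rwa [zsmul_sub, sub_eq_zero] at hNx) with ⟨rfl, rfl⟩ | ⟨rfl, rfl⟩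
  · exact hne (sub_self _)
  · exact hne (sub_eq_zero.2 (add_comm _ _))
end

section
/- Let G be an infinite abelian group of cardinality κ such that the kernels of the maps x ↦ 2x and x ↦ 3x both have cardinality strictly less than κ. Let E ⊆ G be a subset such that for every x ∈ G the set {(a,b) ∈ E × E : a + b = x} has cardinality κ. Then there exists a Sidon subset S ⊆ E with S + S = G. -/
/-!
Enumerate `G` as `(x_i)_{i < κ}`, where `κ` is the initial ordinal of `|G|`, and build the Sidon
set greedily: the set `T_i` built before stage `i` has fewer than `κ` elements, and if
`x_i ∉ T_i + T_i` we add a pair `a, x_i - a` of elements of `E`. Adding the pair can only break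
the Sidon property if `a` lies in an obstruction set built from `T_i` by sums, differences and
preimages under `a ↦ 2a` and `a ↦ 3a`; the hypotheses on the kernels make it smaller than `κ`,
while `κ` many `a` satisfy `a, x_i - a ∈ E`.
-/

open Cardinal Pointwise

/-- A *Sidon set* in an abelian group: `a + b = c + d` forces `{a, b} = {c, d}`. -/
def IsSidon {G : Type*} [AddCommGroup G] (S : Set G) : Prop :=
  ∀ a b c d : G, a ∈ S → b ∈ S → c ∈ S → d ∈ S → a + b = c + d →
    ({a, b} : Set G) = {c, d}

universe u

section Sidon

variable {G : Type*} [AddCommGroup G] {T : Set G}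

theorem IsSidon.insert_of_notMem_add_sub {c : G} (hT : IsSidon T) (hc : c ∉ T + T - T)
    (hcc : c + c ∉ T + T) : IsSidon (insert c T) := by
  replace hc : ∀ u ∈ T, ∀ v ∈ T, ∀ w ∈ T, u + v - w ≠ c := fun u hu v hv w hw h =>
    hc (h ▸ Set.sub_mem_sub (Set.add_mem_add hu hv) hw)
  replace hcc : ∀ u ∈ T, ∀ v ∈ T, u + v ≠ c + c := fun u hu v hv h =>
    hcc (h ▸ Set.add_mem_add hu hv)
  intro p q r s hp hq hr hs h
  rcases hp with rfl | hp <;> rcases hq with rfl | hq <;> rcases hr with rfl | hr <;>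
    rcases hs with rfl | hs
  all_goals first | exact hT _ _ _ _ hp hq hr hs h | (rw [Set.pair_eq_pair_iff]; grind)

theorem IsSidon.sUnion {c : Set (Set G)} (hc : DirectedOn (· ⊆ ·) c)
    (h : ∀ s ∈ c, IsSidon s) : IsSidon (⋃₀ c) := by
  intro p q r s hp hq hr hs hpq
  obtain ⟨t₀, ht₀, -⟩ := Set.mem_sUnion.1 hp
  obtain ⟨t, htc, hpt⟩ := hc.exists_mem_subset_of_finite_of_subset_sUnion
    ⟨t₀, ht₀⟩ (Set.toFinite {p, q, r, s})
    (by simp only [Set.insert_subset_iff, Set.singleton_subset_iff]; exact ⟨hp, hq, hr, hs⟩)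
  simp only [Set.insert_subset_iff, Set.singleton_subset_iff] at hpt
  exact h t htc p q r s hpt.1 hpt.2.1 hpt.2.2.1 hpt.2.2.2 hpq

/-- The `a` for which adding `a` and `x - a` to `T` might create a relation `p + q = r + s`;
the relations it does not list are ruled out by `x ∉ T + T`. -/
def sidonObstruction (T : Set G) (x : G) : Set G :=
  (T + T - T) ∪ ({x} - (T + T - T)) ∪
    (fun a => (2 : ℤ) • a) ⁻¹' ((T + T) ∪ ({(2 : ℤ) • x} - (T + T)) ∪ ({x} + (T - T)) ∪
      ({x} + {y | (2 : ℤ) • y = 0})) ∪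
    (fun a => (3 : ℤ) • a) ⁻¹' (({x} + T) ∪ ({(2 : ℤ) • x} - T))

theorem IsSidon.insert_insert_sub {x a : G} (hT : IsSidon T) (hx : x ∉ T + T)
    (ha : a ∉ sidonObstruction T x) : IsSidon (insert a (insert (x - a) T)) := by
  simp only [sidonObstruction, Set.mem_union, Set.mem_preimage, not_or] at ha
  obtain ⟨⟨⟨h_sub, h_sub'⟩, ⟨⟨⟨h2_add, h2_add'⟩, h2_sub⟩, h2_ker⟩⟩, h3_add, h3_sub⟩ := ha
  -- restate the exclusions elementwise, the form in which `grind` uses them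
  replace hx : ∀ u ∈ T, ∀ v ∈ T, u + v ≠ x := fun u hu v hv h =>
    hx (h ▸ Set.add_mem_add hu hv)
  replace h_sub : ∀ u ∈ T, ∀ v ∈ T, ∀ w ∈ T, u + v - w ≠ a := fun u hu v hv w hw h =>
    h_sub (h ▸ Set.sub_mem_sub (Set.add_mem_add hu hv) hw)
  replace h2_add : ∀ u ∈ T, ∀ v ∈ T, u + v ≠ a + a := fun u hu v hv h =>
    h2_add (by rw [two_zsmul, ← h]; exact Set.add_mem_add hu hv)
  replace h2_sub : ∀ v ∈ T, ∀ w ∈ T, (x - a) + v - w ≠ a := fun v hv w hw h =>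
    h2_sub ⟨x, rfl, v - w, Set.sub_mem_sub hv hw, by grind⟩
  replace h2_ker : (x - a) + (x - a) ≠ a + a := fun h =>
    h2_ker ⟨x, rfl, (2 : ℤ) • a - x, by grind, by grind⟩
  replace h3_add : ∀ u ∈ T, (x - a) + u ≠ a + a := fun u hu h =>
    h3_add ⟨x, rfl, u, hu, by grind⟩
  replace h3_sub : ∀ w ∈ T, (x - a) + (x - a) - w ≠ a := fun w hw h =>
    h3_sub ⟨(2 : ℤ) • x, rfl, w, hw, by grind⟩
  have hb : IsSidon (insert (x - a) T) := hT.insert_of_notMem_add_sub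
    (fun h => h_sub' ⟨x, rfl, x - a, h, sub_sub_cancel x a⟩)
    (fun h => h2_add' ⟨(2 : ℤ) • x, rfl, _, h, by grind⟩)
  refine hb.insert_of_notMem_add_sub ?_ ?_
  · rintro ⟨_, ⟨u, hu, v, hv, rfl⟩, w, hw, h⟩
    rcases hu with rfl | hu <;> rcases hv with rfl | hv <;> rcases hw with rfl | hw <;> grind
  · rintro ⟨u, hu, v, hv, h⟩
    rcases hu with rfl | hu <;> rcases hv with rfl | hv <;> grind

end Sidon

section Cardinality

variable {G : Type*}

theorem mk_preimage_zsmul_le [AddCommGroup G] (n : ℤ) (s : Set G) :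
    #((n • ·) ⁻¹' s : Set G) ≤ #s * #{y : G // n • y = 0} := by
  let r : G → G := Function.invFun (n • ·)
  have hr : ∀ a : G, n • r (n • a) = n • a := fun a => Function.invFun_eq ⟨a, rfl⟩
  calc #((n • ·) ⁻¹' s : Set G) ≤ #(s × {y : G // n • y = 0}) := by
        refine mk_le_of_injective (f := fun a =>
          (⟨n • a.1, a.2⟩, ⟨a.1 - r (n • a.1), by rw [zsmul_sub, hr, sub_self]⟩)) fun a b h => ?_
        simp only [Prod.mk.injEq, Subtype.mk.injEq] at h
        obtain ⟨h₁, h₂⟩ := h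
        rw [h₁] at h₂
        exact Subtype.ext (sub_left_injective h₂)
    _ = #s * #{y : G // n • y = 0} := by rw [mk_prod, lift_id, lift_id]

variable {κ : Cardinal} {s t : Set G}

theorem mk_add_lt_of_lt [Add G] (hκ : ℵ₀ ≤ κ) (hs : #s < κ) (ht : #t < κ) :
    #(s + t : Set G) < κ :=
  mk_add_le.trans_lt (mul_lt_of_lt hκ hs ht)

theorem mk_sub_lt_of_lt [SubNegMonoid G] (hκ : ℵ₀ ≤ κ) (hs : #s < κ) (ht : #t < κ) :
    #(s - t : Set G) < κ :=
  mk_sub_le.trans_lt (mul_lt_of_lt hκ hs ht)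

theorem mk_union_lt_of_lt (hκ : ℵ₀ ≤ κ) (hs : #s < κ) (ht : #t < κ) : #(s ∪ t : Set G) < κ :=
  (mk_union_le s t).trans_lt (add_lt_of_lt hκ hs ht)

theorem mk_singleton_lt (hκ : ℵ₀ ≤ κ) (x : G) : #({x} : Set G) < κ :=
  (mk_singleton x).trans_lt (one_lt_aleph0.trans_le hκ)

theorem mk_preimage_zsmul_lt [AddCommGroup G] (hκ : ℵ₀ ≤ κ) {n : ℤ}
    (hn : #{y : G // n • y = 0} < κ) (hs : #s < κ) : #((n • ·) ⁻¹' s : Set G) < κ :=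
  (mk_preimage_zsmul_le n s).trans_lt (mul_lt_of_lt hκ hs hn)

theorem mk_sidonObstruction_lt [AddCommGroup G] [Infinite G]
    (hker2 : #{y : G // (2 : ℤ) • y = 0} < #G) (hker3 : #{y : G // (3 : ℤ) • y = 0} < #G)
    {T : Set G} (hT : #T < #G) (x : G) : #(sidonObstruction T x) < #G := by
  have hκ := aleph0_le_mk G
  unfold sidonObstruction
  apply_rules [mk_union_lt_of_lt hκ, mk_add_lt_of_lt hκ, mk_sub_lt_of_lt hκ, mk_singleton_lt hκ,
    mk_preimage_zsmul_lt hκ hker2, mk_preimage_zsmul_lt hκ hker3]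

theorem IsSidon.exists_insert_insert [AddCommGroup G] [Infinite G]
    (hker2 : #{y : G // (2 : ℤ) • y = 0} < #G) (hker3 : #{y : G // (3 : ℤ) • y = 0} < #G)
    {E T : Set G} {x : G} (hE : #G ≤ #{p : G × G // p.1 ∈ E ∧ p.2 ∈ E ∧ p.1 + p.2 = x})
    (hT : IsSidon T) (hTc : #T < #G) (hx : x ∉ T + T) :
    ∃ a b, a ∈ E ∧ b ∈ E ∧ a + b = x ∧ IsSidon (insert a (insert b T)) := by
  have hA : #G ≤ #{a | a ∈ E ∧ x - a ∈ E} := hE.trans <| mk_le_of_surjective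
    (f := fun a => ⟨(a.1, x - a.1), a.2.1, a.2.2, add_sub_cancel _ _⟩)
    fun ⟨⟨a, b⟩, ha, hb, hab⟩ => ⟨⟨a, ha, by rwa [← hab, add_sub_cancel_left]⟩, by simp [← hab]⟩
  obtain ⟨a, ⟨ha, hb⟩, hO⟩ := Set.not_subset.1 fun h =>
    (hA.trans (mk_le_mk_of_subset h)).not_gt (mk_sidonObstruction_lt hker2 hker3 hTc x)
  exact ⟨a, x - a, ha, hb, add_sub_cancel a x, hT.insert_insert_sub hx hO⟩

end Cardinality

section Transfinite

theorem exists_eq_biUnion_Iio_fix {ι α : Type*} [LinearOrder ι] [WellFoundedLT ι]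
    (f : Set α → ι → Set α) : ∃ F : ι → Set α, ∀ i, F i = f (⋃ j < i, F j) i :=
  ⟨wellFounded_lt.fix fun i F => f (⋃ (j) (h : j < i), F j h) i,
    fun i => wellFounded_lt.fix_eq _ i⟩

theorem mk_biUnion_Iio_lt {κ : Cardinal.{u}} {α : Type u} (hκ : ℵ₀ ≤ κ) {n : ℕ}
    {F : κ.ord.ToType → Set α} (hF : ∀ i, #(F i) ≤ n) (i : κ.ord.ToType) :
    #(⋃ j < i, F j) < κ :=
  calc #(⋃ j < i, F j) ≤ #(⋃ j : Set.Iio i, F j) := mk_le_mk_of_subset fun y hy => by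
          simp only [Set.mem_iUnion] at hy ⊢
          obtain ⟨j, hj, hy⟩ := hy
          exact ⟨⟨j, hj⟩, hy⟩
    _ ≤ #(Set.Iio i) * ⨆ j : Set.Iio i, #(F j) := mk_iUnion_le _
    _ < κ := mul_lt_of_lt hκ (by simpa using mk_Iio_lt i) <|
        (ciSup_le' fun _ => hF _).trans_lt (natCast_lt_aleph0.trans_le hκ)

variable {G : Type*} [Add G] {P : Set G → Prop}

theorem exists_greedy_step
    (hext : ∀ T, P T → #T < #G → ∀ x ∉ T + T, ∃ a b, a + b = x ∧ P (insert a (insert b T)))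
    (T : Set G) (x : G) :
    ∃ D : Set G, #D ≤ 2 ∧ (P T → P (T ∪ D) ∧ (#T < #G → x ∈ (T ∪ D) + (T ∪ D))) := by
  by_cases h : P T ∧ #T < #G ∧ x ∉ T + T
  · obtain ⟨a, b, rfl, hab⟩ := hext T h.1 h.2.1 _ h.2.2
    refine ⟨{a, b}, mk_insert_le.trans ?_, fun _ => ⟨?_, fun _ => ?_⟩⟩
    · simp [one_add_one_eq_two]
    · rwa [Set.union_insert, Set.union_singleton]
    · exact Set.add_mem_add (by simp) (by simp)
  · refine ⟨∅, by simp, fun hT => ⟨by rwa [Set.union_empty], fun hTc => ?_⟩⟩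
    rw [Set.union_empty]
    by_contra hx
    exact h ⟨hT, hTc, hx⟩

theorem exists_add_eq_univ_of_extend [Infinite G]
    (hP : ∀ c : Set (Set G), IsChain (· ⊆ ·) c → (∀ s ∈ c, P s) → P (⋃₀ c))
    (hext : ∀ T, P T → #T < #G → ∀ x ∉ T + T, ∃ a b, a + b = x ∧ P (insert a (insert b T))) :
    ∃ S, P S ∧ S + S = Set.univ := by
  choose D hD₂ hD using exists_greedy_step hext
  obtain ⟨e⟩ : Nonempty ((#G).ord.ToType ≃ G) := Cardinal.eq.1 (mk_ord_toType #G)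
  obtain ⟨F, hF⟩ := exists_eq_biUnion_Iio_fix fun T i => D T (e i)
  -- `T i` and `U i` are the sets built before and after stage `i`
  set T := fun i => ⋃ j < i, F j
  set U := fun i => T i ∪ F i
  have hstage : ∀ i, P (T i) → P (U i) ∧ (#(T i) < #G → e i ∈ U i + U i) := fun i => by
    have := hD (T i) (e i)
    rwa [← hF i] at this
  have hUT : ∀ {j k}, j < k → U j ⊆ T k := fun hjk => Set.union_subset
    (Set.biUnion_mono (fun _ h => lt_trans h hjk) fun _ _ => subset_rfl)
    (Set.subset_biUnion_of_mem (u := F) hjk)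
  have hU : Monotone U := fun j k hjk => hjk.eq_or_lt.elim (fun h => h ▸ subset_rfl)
    fun h => (hUT h).trans Set.subset_union_left
  have hUnion : ∀ s, (∀ j ∈ s, P (U j)) → P (⋃ j ∈ s, U j) := fun s hs => by
    simpa only [Set.sUnion_image] using
      hP _ (hU.isChain_image (isChain_of_trichotomous s)) (Set.forall_mem_image.2 hs)
  have hPT : ∀ i, P (T i) := by
    intro i
    induction i using WellFoundedLT.induction with
    | _ i ih =>
      have hTU : T i = ⋃ j < i, U j := subset_antisymm
        (Set.biUnion_mono (fun _ h => h) fun _ _ => Set.subset_union_right)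
        (Set.iUnion₂_subset fun _ => hUT)
      rw [hTU]
      exact hUnion _ fun j hj => (hstage j (ih j hj)).1
  refine ⟨⋃ i, U i, by simpa using hUnion Set.univ fun i _ => (hstage i (hPT i)).1, ?_⟩
  refine Set.eq_univ_of_forall fun x => ?_
  have hUS : U (e.symm x) ⊆ ⋃ i, U i := Set.subset_iUnion U _
  have hx := (hstage _ (hPT (e.symm x))).2 <|
    mk_biUnion_Iio_lt (aleph0_le_mk G) (fun j => hF j ▸ hD₂ _ _) _
  rw [e.apply_symm_apply] at hx
  exact Set.add_subset_add hUS hUS hx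

end Transfinite

/-- If `G` is an infinite abelian group of cardinality `κ` whose `2`- and `3`-torsion
kernels have cardinality `< κ`, and `E ⊆ G` is such that every `x ∈ G` has `κ` many
representations `x = a + b` with `a, b ∈ E`, then `E` contains a Sidon set `S` with
`S + S = G`. -/
theorem exists_sidon_subset_with_full_sumset
    {G : Type*} [AddCommGroup G] [Infinite G]
    (hker2 : Cardinal.mk {x : G // (2 : ℤ) • x = 0} < Cardinal.mk G)
    (hker3 : Cardinal.mk {x : G // (3 : ℤ) • x = 0} < Cardinal.mk G)
    (E : Set G)
    (hE : ∀ x : G, Cardinal.mk {p : G × G // p.1 ∈ E ∧ p.2 ∈ E ∧ p.1 + p.2 = x}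
            = Cardinal.mk G) :
    ∃ S : Set G, S ⊆ E ∧ IsSidon S ∧ S + S = Set.univ := by
  obtain ⟨S, ⟨hSE, hS⟩, hSS⟩ := exists_add_eq_univ_of_extend (P := fun S => S ⊆ E ∧ IsSidon S)
    (fun c hc h => ⟨Set.sUnion_subset fun s hs => (h s hs).1,
      IsSidon.sUnion hc.directedOn fun s hs => (h s hs).2⟩)
    fun T ⟨hTE, hT⟩ hTc x hx => by
      obtain ⟨a, b, ha, hb, rfl, hab⟩ :=
        IsSidon.exists_insert_insert hker2 hker3 (hE x).ge hT hTc hx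
      exact ⟨a, b, rfl, Set.insert_subset ha (Set.insert_subset hb hTE), hab⟩
  exact ⟨S, hSE, hS, hSS⟩
end

section
/- Every Lebesgue measurable Sidon subset S of ℝ with S + S = ℝ has Lebesgue measure zero. -/
/-!
For `t ≠ 0`, two points `x, y` of `S ∩ (t +ᵥ S)` give the coincidence of sums
`x + (y - t) = y + (x - t)`, so the Sidon property forces `x = y`: each such intersection is a
subsingleton, hence null. On the other hand, a set of positive Haar measure meets all of its
translates by elements near `0` in positive measure (Steinhaus).
-/

open MeasureTheory Pointwise

open Filter Topology

theorem IsSidon.subsingleton_inter_vadd {G : Type*} [AddCommGroup G] {S : Set G} (hS : IsSidon S)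
    {t : G} (ht : t ≠ 0) : (S ∩ (t +ᵥ S)).Subsingleton := by
  rintro x ⟨hxS, x', hx'S, rfl⟩ y ⟨hyS, y', hy'S, rfl⟩
  have hpair := hS _ _ _ _ hxS hy'S hyS hx'S (by simp only [vadd_eq_add]; abel)
  have hmem : t + x' ∈ ({t + y', x'} : Set G) := hpair ▸ Set.mem_insert _ _
  rcases hmem with h | h
  · exact h
  · exact absurd (by simpa using h) ht

theorem eventually_nhds_zero_measure_inter_vadd_ne_zero {G : Type*} [AddGroup G]
    [TopologicalSpace G] [IsTopologicalAddGroup G] [LocallyCompactSpace G] [T2Space G]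
    [MeasurableSpace G] [BorelSpace G] {μ : Measure G} [μ.IsAddLeftInvariant]
    [IsFiniteMeasureOnCompacts μ] [μ.InnerRegular] {S : Set G} (hS : MeasurableSet S)
    (hS0 : μ S ≠ 0) : ∀ᶠ t in 𝓝 (0 : G), μ (S ∩ (t +ᵥ S)) ≠ 0 := by
  obtain ⟨K, hKS, hK, hKpos⟩ := hS.exists_lt_isCompact (pos_iff_ne_zero.mpr hS0)
  filter_upwards [eventually_nhds_zero_measure_vadd_sdiff_lt (μ := μ) hK hK.isClosed hKpos.ne']
    with t ht
  have hcover : μ K ≤ μ ((t +ᵥ K) ∩ K) + μ ((t +ᵥ K) \ K) := by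
    rw [← measure_vadd μ t K]
    exact measure_le_inter_add_sdiff μ _ _
  have hinter : 0 < μ ((t +ᵥ K) ∩ K) := by
    by_contra! h
    rw [nonpos_iff_eq_zero.mp h, zero_add] at hcover
    exact hcover.not_gt ht
  refine (hinter.trans_le (measure_mono ?_)).ne'
  rw [Set.inter_comm]
  exact Set.inter_subset_inter hKS (Set.vadd_set_mono hKS)

theorem IsSidon.measure_eq_zero {G : Type*} [AddCommGroup G] [TopologicalSpace G]
    [IsTopologicalAddGroup G] [LocallyCompactSpace G] [T2Space G] [(𝓝[≠] (0 : G)).NeBot]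
    [MeasurableSpace G] [BorelSpace G] {μ : Measure G} [μ.IsAddLeftInvariant]
    [IsFiniteMeasureOnCompacts μ] [μ.InnerRegular] [NullSingletonClass μ] {S : Set G}
    (hS : IsSidon S) (hmeas : MeasurableSet S) : μ S = 0 := by
  by_contra hne
  have hsteinhaus : ∀ᶠ t in 𝓝[≠] (0 : G), μ (S ∩ (t +ᵥ S)) ≠ 0 ∧ t ≠ 0 :=
    ((eventually_nhds_zero_measure_inter_vadd_ne_zero hmeas hne).filter_mono
      nhdsWithin_le_nhds).and self_mem_nhdsWithin
  obtain ⟨t, hinter, ht⟩ := hsteinhaus.exists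
  exact hinter ((hS.subsingleton_inter_vadd ht).measure_zero μ)

theorem sidon_measurable_full_sumset_null_general
    (S : Set ℝ) (hmeas : MeasurableSet S) (hS : IsSidon S) :
    volume S = 0 :=
  hS.measure_eq_zero hmeas

/-- A Lebesgue measurable Sidon subset of `ℝ` whose sumset is all of `ℝ` is a null set. -/
theorem sidon_measurable_full_sumset_null
    (S : Set ℝ) (hmeas : MeasurableSet S) (hS : IsSidon S) (hsum : S + S = Set.univ) :
    volume S = 0 :=
  sidon_measurable_full_sumset_null_general S hmeas hS
end

section
/- Let E = { ∑_{i≥1} aᵢ / (2ⁱ (i+1)!) : aᵢ ∈ {0,…,i} } ⊆ [0,1]. Then E has Hausdorff dimension 1, and E + E has Lebesgue measure zero. -/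
/-!
Put `w i = 1 / (2ⁱ (i+1)!)` and `v i = 1 / (i+1)!`, so that `E = {∑ aᵢ wᵢ : aᵢ ≤ i}`. Since
`∑_{i > N} i wᵢ ≤ w N / 2`, two digit sequences that first differ at `N` give points of `E` at
distance at least `w N / 2`, while the same digits read against `v` give points at distance at
most `1 / N!`. As `1 / N!` is `O((w N)^r)` for every `r < 1`, the map `∑ aᵢ wᵢ ↦ ∑ aᵢ vᵢ` is
`r`-Hölder on `E`; its image contains `[0, 1)` (the factorial number system), so `dimH E ≥ r`.

Points of `E + E` are sums `∑ cᵢ wᵢ` with `cᵢ ≤ 2i`. Fixing `c₀, …, c_N` confines such a sum to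
an interval of length `w N`, so `E + E` is covered by `∏_{i ≤ N} (2i+1)` intervals of total
length `∏_{i < N} (2i+3)/(2i+4)`, which is at most `√(3 / (2N+3))`.
-/

open MeasureTheory Pointwise Filter Finset Topology Set
open scoped NNReal ENNReal Nat

namespace FactorialDigits

noncomputable def digitSum (u : ℕ → ℝ) (a : ℕ → ℕ) : ℝ := ∑' i, (a i : ℝ) * u i

def digits (m : ℕ) : Set (ℕ → ℕ) := {a | ∀ i, a i ≤ m * i}

section digitSum

variable {u : ℕ → ℝ} {m n : ℕ} {a b : ℕ → ℕ}

lemma summable_digits (hu0 : ∀ i, 0 ≤ u i) (hu : Summable fun i : ℕ => (i : ℝ) * u i)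
    (ha : a ∈ digits m) : Summable fun i => (a i : ℝ) * u i :=
  (hu.mul_left (m : ℝ)).of_nonneg_of_le (fun i => mul_nonneg (Nat.cast_nonneg _) (hu0 i))
    fun i => by
      rw [← mul_assoc]
      exact mul_le_mul_of_nonneg_right (by exact_mod_cast ha i) (hu0 i)

lemma digitSum_eq_sum_add_tail (hu0 : ∀ i, 0 ≤ u i) (hu : Summable fun i : ℕ => (i : ℝ) * u i)
    (ha : a ∈ digits m) (N : ℕ) :
    digitSum u a = ∑ i ∈ range N, (a i : ℝ) * u i + ∑' i, (a (i + N) : ℝ) * u (i + N) :=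
  ((summable_digits hu0 hu ha).sum_add_tsum_nat_add N).symm

lemma tail_nonneg (hu0 : ∀ i, 0 ≤ u i) (a : ℕ → ℕ) (N : ℕ) :
    0 ≤ ∑' i, (a (i + N) : ℝ) * u (i + N) :=
  tsum_nonneg fun _ => mul_nonneg (Nat.cast_nonneg _) (hu0 _)

lemma tail_le (hu0 : ∀ i, 0 ≤ u i) (hu : Summable fun i : ℕ => (i : ℝ) * u i)
    (ha : a ∈ digits m) (N : ℕ) :
    ∑' i, (a (i + N) : ℝ) * u (i + N) ≤ m * ∑' i, ((i + N : ℕ) : ℝ) * u (i + N) := by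
  rw [← tsum_mul_left]
  refine Summable.tsum_le_tsum (fun i => ?_)
    ((summable_nat_add_iff N).2 (summable_digits hu0 hu ha))
    (((summable_nat_add_iff N).2 hu).mul_left _)
  rw [← mul_assoc]
  exact mul_le_mul_of_nonneg_right (by exact_mod_cast ha (i + N)) (hu0 _)

lemma digitSum_add (hu0 : ∀ i, 0 ≤ u i) (hu : Summable fun i : ℕ => (i : ℝ) * u i)
    (ha : a ∈ digits m) (hb : b ∈ digits n) :
    digitSum u (a + b) = digitSum u a + digitSum u b := by
  rw [digitSum, digitSum, digitSum,
    ← (summable_digits hu0 hu ha).tsum_add (summable_digits hu0 hu hb)]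
  refine tsum_congr fun i => ?_
  push_cast [Pi.add_apply]
  ring

lemma image_digitSum_add_subset (hu0 : ∀ i, 0 ≤ u i) (hu : Summable fun i : ℕ => (i : ℝ) * u i) :
    digitSum u '' digits m + digitSum u '' digits n ⊆ digitSum u '' digits (m + n) := by
  rintro _ ⟨_, ⟨a, ha, rfl⟩, _, ⟨b, hb, rfl⟩, rfl⟩
  exact ⟨a + b, fun i => by simpa [add_mul] using add_le_add (ha i) (hb i),
    digitSum_add hu0 hu ha hb⟩

lemma volume_image_digitSum_le (hu0 : ∀ i, 0 ≤ u i) (hu : Summable fun i : ℕ => (i : ℝ) * u i)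
    (N : ℕ) : volume (digitSum u '' digits m) ≤ (∏ i ∈ range N, (m * i + 1) : ℕ) *
      ENNReal.ofReal (m * ∑' i, ((i + N : ℕ) : ℝ) * u (i + N)) := by
  set ℓ := (m : ℝ) * ∑' i, ((i + N : ℕ) : ℝ) * u (i + N)
  have hcover : digitSum u '' digits m ⊆ ⋃ t : (i : Fin N) → Fin (m * i + 1),
      Icc (∑ i, ((t i : ℕ) : ℝ) * u i) (∑ i, ((t i : ℕ) : ℝ) * u i + ℓ) := by
    rintro _ ⟨c, hc, rfl⟩
    refine mem_iUnion.2 ⟨fun i => ⟨c i, Nat.lt_succ_of_le (hc i)⟩, ?_⟩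
    rw [Fin.sum_univ_eq_sum_range (fun i => (c i : ℝ) * u i), digitSum_eq_sum_add_tail hu0 hu hc N]
    exact ⟨by linarith [tail_nonneg hu0 c N], by linarith [tail_le hu0 hu hc N]⟩
  calc volume (digitSum u '' digits m)
      ≤ ∑ t : (i : Fin N) → Fin (m * i + 1),
          volume (Icc (∑ i, ((t i : ℕ) : ℝ) * u i) (∑ i, ((t i : ℕ) : ℝ) * u i + ℓ)) :=
        (measure_mono hcover).trans (measure_iUnion_fintype_le _ _)
    _ = (∏ i ∈ range N, (m * i + 1) : ℕ) * ENNReal.ofReal ℓ := by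
        simp [Real.volume_Icc, Fintype.card_pi, Fin.prod_univ_eq_prod_range (fun i => m * i + 1)]

end digitSum

noncomputable def factorialWeight (i : ℕ) : ℝ := ((i + 1)! : ℝ)⁻¹

noncomputable def weight (i : ℕ) : ℝ := ((2 : ℝ) ^ i * (i + 1)!)⁻¹

lemma factorialWeight_nonneg (i : ℕ) : 0 ≤ factorialWeight i := by
  rw [factorialWeight]; positivity

lemma weight_pos (i : ℕ) : 0 < weight i := by
  rw [weight]; positivity

lemma weight_eq (i : ℕ) : weight i = ((2 : ℝ) ^ i)⁻¹ * factorialWeight i :=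
  mul_inv _ _

lemma weight_le_factorialWeight (i : ℕ) : weight i ≤ factorialWeight i := by
  rw [weight_eq]
  exact mul_le_of_le_one_left (factorialWeight_nonneg i)
    (inv_le_one_of_one_le₀ (one_le_pow₀ one_le_two))

lemma natCast_mul_factorialWeight (i : ℕ) :
    (i : ℝ) * factorialWeight i = ((i ! : ℝ))⁻¹ - ((i + 1)! : ℝ)⁻¹ := by
  rw [factorialWeight, Nat.factorial_succ]
  push_cast
  field_simp
  ring

lemma sum_range_tail_factorialWeight (N n : ℕ) :
    ∑ i ∈ range n, ((i + N : ℕ) : ℝ) * factorialWeight (i + N) =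
      ((N ! : ℝ))⁻¹ - ((n + N)! : ℝ)⁻¹ := by
  simp only [natCast_mul_factorialWeight, Nat.add_right_comm _ N 1]
  simpa using sum_range_sub' (fun i => (((i + N)! : ℕ) : ℝ)⁻¹) n

lemma tail_factorialWeight_le (N : ℕ) :
    ∑' i, ((i + N : ℕ) : ℝ) * factorialWeight (i + N) ≤ ((N ! : ℝ))⁻¹ :=
  Real.tsum_le_of_sum_range_le (fun _ => mul_nonneg (Nat.cast_nonneg _) (factorialWeight_nonneg _))
    fun n => by rw [sum_range_tail_factorialWeight]; exact sub_le_self _ (by positivity)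

lemma summable_natCast_mul_factorialWeight : Summable fun i : ℕ => (i : ℝ) * factorialWeight i :=
  summable_of_sum_range_le (fun _ => mul_nonneg (Nat.cast_nonneg _) (factorialWeight_nonneg _))
    fun n => by
      simpa using (sum_range_tail_factorialWeight 0 n).trans_le (sub_le_self _ (by positivity))

lemma summable_natCast_mul_weight : Summable fun i : ℕ => (i : ℝ) * weight i :=
  summable_natCast_mul_factorialWeight.of_nonneg_of_le
    (fun i => mul_nonneg (Nat.cast_nonneg _) (weight_pos i).le)
    fun i => mul_le_mul_of_nonneg_left (weight_le_factorialWeight i) (Nat.cast_nonneg _)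

lemma weight_div_two (N : ℕ) : weight N / 2 = ((2 : ℝ) ^ (N + 1) * (N + 1)!)⁻¹ := by
  rw [weight, pow_succ, div_eq_mul_inv, ← mul_inv, mul_right_comm]

lemma tail_weight_le (N : ℕ) :
    ∑' i, ((i + (N + 1) : ℕ) : ℝ) * weight (i + (N + 1)) ≤ weight N / 2 := by
  refine Real.tsum_le_of_sum_range_le (fun _ => mul_nonneg (Nat.cast_nonneg _) (weight_pos _).le)
    fun n => ?_
  calc ∑ i ∈ range n, ((i + (N + 1) : ℕ) : ℝ) * weight (i + (N + 1))
      ≤ ∑ i ∈ range n, ((2 : ℝ) ^ (N + 1))⁻¹ *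
          (((i + (N + 1) : ℕ) : ℝ) * factorialWeight (i + (N + 1))) := by
        refine sum_le_sum fun i _ => ?_
        rw [weight_eq, mul_left_comm]
        exact mul_le_mul_of_nonneg_right
          (inv_anti₀ (by positivity) (pow_le_pow_right₀ one_le_two (Nat.le_add_left _ _)))
          (mul_nonneg (Nat.cast_nonneg _) (factorialWeight_nonneg _))
    _ ≤ ((2 : ℝ) ^ (N + 1))⁻¹ * (((N + 1)! : ℝ))⁻¹ := by
        rw [← mul_sum, sum_range_tail_factorialWeight]
        gcongr
        exact sub_le_self _ (by positivity)
    _ = weight N / 2 := by rw [weight_div_two, mul_inv]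

lemma exists_ne_forall_lt_eq {α : Type*} {a b : ℕ → α} (h : a ≠ b) :
    ∃ N, a N ≠ b N ∧ ∀ i < N, a i = b i := by
  classical
  have hex : ∃ N, a N ≠ b N := Function.ne_iff.1 h
  exact ⟨Nat.find hex, Nat.find_spec hex, fun i hi => not_not.1 (Nat.find_min hex hi)⟩

section separation

variable {a b : ℕ → ℕ} {N : ℕ}

lemma abs_digitSum_factorialWeight_sub_le (ha : a ∈ digits 1) (hb : b ∈ digits 1)
    (heq : ∀ i < N, a i = b i) :
    |digitSum factorialWeight a - digitSum factorialWeight b| ≤ ((N ! : ℝ))⁻¹ := by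
  have hu0 := factorialWeight_nonneg
  have hu := summable_natCast_mul_factorialWeight
  rw [digitSum_eq_sum_add_tail hu0 hu ha N, digitSum_eq_sum_add_tail hu0 hu hb N,
    sum_congr rfl fun i hi => by rw [heq i (mem_range.1 hi)], add_sub_add_left_eq_sub, abs_le]
  have hta := tail_le hu0 hu ha N
  have htb := tail_le hu0 hu hb N
  have htail := tail_factorialWeight_le N
  rw [Nat.cast_one, one_mul] at hta htb
  constructor <;> linarith [tail_nonneg hu0 a N, tail_nonneg hu0 b N]

lemma weight_div_two_le_digitSum_sub (ha : a ∈ digits 1) (hb : b ∈ digits 1) (hlt : b N < a N)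
    (heq : ∀ i < N, a i = b i) :
    weight N / 2 ≤ digitSum weight a - digitSum weight b := by
  have hu0 i := (weight_pos i).le
  have hu := summable_natCast_mul_weight
  rw [digitSum_eq_sum_add_tail hu0 hu ha (N + 1), digitSum_eq_sum_add_tail hu0 hu hb (N + 1),
    sum_range_succ, sum_range_succ, sum_congr rfl fun i hi => by rw [heq i (mem_range.1 hi)]]
  have hdigit : (b N : ℝ) + 1 ≤ a N := by exact_mod_cast hlt
  have htb := tail_le hu0 hu hb (N + 1)
  rw [Nat.cast_one, one_mul] at htb
  nlinarith [tail_nonneg hu0 a (N + 1), tail_weight_le N, weight_pos N]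

lemma weight_div_two_le_abs_digitSum_sub (ha : a ∈ digits 1) (hb : b ∈ digits 1)
    (hne : a N ≠ b N) (heq : ∀ i < N, a i = b i) :
    weight N / 2 ≤ |digitSum weight a - digitSum weight b| := by
  rcases hne.lt_or_gt with hlt | hlt
  · rw [abs_sub_comm]
    exact (weight_div_two_le_digitSum_sub hb ha hlt fun i hi => (heq i hi).symm).trans
      (le_abs_self _)
  · exact (weight_div_two_le_digitSum_sub ha hb hlt heq).trans (le_abs_self _)

end separation

lemma injOn_digitSum_weight : InjOn (digitSum weight) (digits 1) := by
  intro a ha b hb hab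
  by_contra hne
  obtain ⟨N, hN, heq⟩ := exists_ne_forall_lt_eq hne
  have := weight_div_two_le_abs_digitSum_sub ha hb hN heq
  rw [hab, sub_self, abs_zero] at this
  linarith [weight_pos N]

/-- `weight N / 2 ≥ 1 / (4^(N+1) N!)` and `(4^k)^N / N!` is bounded. -/
lemma exists_inv_factorial_pow_le (k : ℕ) :
    ∃ C : ℝ≥0, ∀ N : ℕ, ((N ! : ℝ))⁻¹ ^ (k + 1) ≤ C * (weight N / 2) ^ k := by
  obtain ⟨M, hM⟩ := (FloorSemiring.tendsto_pow_div_factorial_atTop ((4 : ℝ) ^ k)).bddAbove_range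
  refine ⟨(4 ^ k * M).toNNReal, fun N => ?_⟩
  have hweight : ((4 : ℝ) ^ (N + 1) * N !)⁻¹ ≤ weight N / 2 := by
    have hsucc : (N + 1 : ℝ) ≤ 2 ^ (N + 1) := by exact_mod_cast (Nat.lt_two_pow_self).le
    rw [weight_div_two]
    refine inv_anti₀ (by positivity) ?_
    rw [Nat.factorial_succ, show (4 : ℝ) = 2 * 2 by norm_num, mul_pow]
    push_cast
    rw [mul_assoc (2 ^ (N + 1) : ℝ)]
    gcongr
  calc ((N ! : ℝ))⁻¹ ^ (k + 1)
      = 4 ^ k * (((4 : ℝ) ^ k) ^ N / N !) * (((4 : ℝ) ^ (N + 1) * N !)⁻¹) ^ k := by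
        have h4 : ((4 : ℝ) ^ (N + 1)) ^ k = 4 ^ k * (4 ^ k) ^ N := by ring
        rw [mul_inv, mul_pow, inv_pow (4 ^ (N + 1) : ℝ), h4, pow_succ]
        field_simp
    _ ≤ (4 ^ k * M) * (((4 : ℝ) ^ (N + 1) * N !)⁻¹) ^ k := by
        gcongr
        exact hM ⟨N, rfl⟩
    _ ≤ (4 ^ k * M).toNNReal * (weight N / 2) ^ k := by
        gcongr
        exact Real.le_coe_toNNReal _

lemma exists_abs_digitSum_sub_pow_le (k : ℕ) : ∃ C : ℝ≥0, ∀ a ∈ digits 1, ∀ b ∈ digits 1,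
    |digitSum factorialWeight a - digitSum factorialWeight b| ^ (k + 1) ≤
      C * |digitSum weight a - digitSum weight b| ^ k := by
  obtain ⟨C, hC⟩ := exists_inv_factorial_pow_le k
  refine ⟨C, fun a ha b hb => ?_⟩
  rcases eq_or_ne a b with rfl | hne
  · rw [sub_self, abs_zero, zero_pow k.succ_ne_zero]
    positivity
  obtain ⟨N, hN, heq⟩ := exists_ne_forall_lt_eq hne
  calc |digitSum factorialWeight a - digitSum factorialWeight b| ^ (k + 1)
      ≤ ((N ! : ℝ))⁻¹ ^ (k + 1) := by
        gcongr
        exact abs_digitSum_factorialWeight_sub_le ha hb heq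
    _ ≤ C * (weight N / 2) ^ k := hC N
    _ ≤ C * |digitSum weight a - digitSum weight b| ^ k := by
        have := (weight_pos N).le
        gcongr
        exact weight_div_two_le_abs_digitSum_sub ha hb hN heq

lemma holderOnWith_of_dist_pow_le {X Y : Type*} [PseudoMetricSpace X] [PseudoMetricSpace Y]
    {f : X → Y} {s : Set X} {C : ℝ≥0} {k : ℕ}
    (h : ∀ x ∈ s, ∀ y ∈ s, dist (f x) (f y) ^ (k + 1) ≤ C * dist x y ^ k) :
    HolderOnWith (C ^ ((k + 1 : ℝ)⁻¹)) ((k : ℝ≥0) / (k + 1)) f s := by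
  intro x hx y hy
  have hreal : dist (f x) (f y) ≤ (C : ℝ) ^ ((k + 1 : ℝ)⁻¹) * dist x y ^ ((k : ℝ) / (k + 1)) :=
    calc dist (f x) (f y) = (dist (f x) (f y) ^ (k + 1)) ^ ((k + 1 : ℕ) : ℝ)⁻¹ :=
          (Real.pow_rpow_inv_natCast dist_nonneg k.succ_ne_zero).symm
      _ ≤ (C * dist x y ^ k) ^ ((k + 1 : ℕ) : ℝ)⁻¹ := by gcongr; exact h x hx y hy
      _ = (C : ℝ) ^ ((k + 1 : ℝ)⁻¹) * dist x y ^ ((k : ℝ) / (k + 1)) := by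
          rw [Real.mul_rpow C.coe_nonneg (by positivity), ← Real.rpow_natCast_mul dist_nonneg,
            div_eq_mul_inv]
          push_cast
          rfl
  rw [edist_dist, edist_dist, ← ENNReal.ofReal_coe_nnreal,
    ENNReal.ofReal_rpow_of_nonneg dist_nonneg (by positivity), ← ENNReal.ofReal_mul (by positivity)]
  exact ENNReal.ofReal_le_ofReal (by simpa using hreal)

lemma coe_le_dimH_of_holderOnWith {X : Type*} [EMetricSpace X] {f : X → ℝ} {s : Set X}
    {C r : ℝ≥0} (hf : HolderOnWith C r f s) (hr : 0 < r) (h : (interior (f '' s)).Nonempty) :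
    (r : ℝ≥0∞) ≤ dimH s := by
  have := hf.dimH_image_le hr
  rwa [Real.dimH_of_nonempty_interior h, Module.finrank_self, Nat.cast_one,
    ENNReal.le_div_iff_mul_le (Or.inl (by simpa using hr.ne')) (Or.inl ENNReal.coe_ne_top),
    one_mul] at this

noncomputable def factorialDigit (y : ℝ) (n : ℕ) : ℕ := ⌊y * (n + 1)!⌋₊ % (n + 1)

lemma factorialDigit_mem_digits (y : ℝ) : factorialDigit y ∈ digits 1 := fun n => by
  rw [one_mul]
  exact Nat.lt_succ_iff.1 (Nat.mod_lt _ n.succ_pos)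

lemma floor_mul_factorial_succ (y : ℝ) (n : ℕ) :
    ⌊y * (n + 1)!⌋₊ = (n + 1) * ⌊y * n !⌋₊ + factorialDigit y n := by
  have hdiv : ⌊y * n !⌋₊ = ⌊y * (n + 1)!⌋₊ / (n + 1) := by
    rw [← Nat.floor_div_natCast, Nat.factorial_succ]
    push_cast
    field_simp
  rw [hdiv, factorialDigit, Nat.div_add_mod]

lemma sum_range_factorialDigit {y : ℝ} (hy : y < 1) (n : ℕ) :
    ∑ i ∈ range n, (factorialDigit y i : ℝ) * factorialWeight i = ⌊y * n !⌋₊ / n ! := by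
  induction n with
  | zero => simp [Nat.floor_eq_zero.2 hy]
  | succ n ih =>
    rw [sum_range_succ, ih, floor_mul_factorial_succ y n, factorialWeight, Nat.factorial_succ]
    push_cast
    field_simp

lemma digitSum_factorialDigit {y : ℝ} (hy0 : 0 ≤ y) (hy1 : y < 1) :
    digitSum factorialWeight (factorialDigit y) = y := by
  refine ((hasSum_iff_tendsto_nat_of_nonneg
    (fun i => mul_nonneg (Nat.cast_nonneg _) (factorialWeight_nonneg i)) y).2 ?_).tsum_eq
  simp only [sum_range_factorialDigit hy1]
  exact (tendsto_nat_floor_mul_div_atTop hy0).comp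
    (tendsto_natCast_atTop_atTop.comp factorial_tendsto_atTop)

lemma Ico_subset_image_digitSum_factorialWeight :
    Ico (0 : ℝ) 1 ⊆ digitSum factorialWeight '' digits 1 :=
  fun y hy => ⟨factorialDigit y, factorialDigit_mem_digits y, digitSum_factorialDigit hy.1 hy.2⟩

lemma one_le_dimH_image_digitSum_weight : 1 ≤ dimH (digitSum weight '' digits 1) := by
  set g := digitSum factorialWeight ∘ Function.invFunOn (digitSum weight) (digits 1)
  have hg : ∀ a ∈ digits 1, g (digitSum weight a) = digitSum factorialWeight a :=
    fun a ha => congrArg (digitSum factorialWeight) (injOn_digitSum_weight.leftInvOn_invFunOn ha)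
  have hint : (interior (g '' (digitSum weight '' digits 1))).Nonempty := by
    rw [image_image, image_congr hg]
    exact ⟨1 / 2, interior_mono Ico_subset_image_digitSum_factorialWeight
      (by rw [interior_Ico]; norm_num)⟩
  have hr (k : ℕ) (hk : 0 < k) :
      (((k : ℝ≥0) / (k + 1) : ℝ≥0) : ℝ≥0∞) ≤ dimH (digitSum weight '' digits 1) := by
    obtain ⟨C, hC⟩ := exists_abs_digitSum_sub_pow_le k
    refine coe_le_dimH_of_holderOnWith (holderOnWith_of_dist_pow_le (C := C) ?_)
      (by positivity) hint
    rintro _ ⟨a, ha, rfl⟩ _ ⟨b, hb, rfl⟩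
    simpa only [Real.dist_eq, hg a ha, hg b hb] using hC a ha b hb
  have hlim : Tendsto (fun k : ℕ => (((k : ℝ≥0) / (k + 1) : ℝ≥0) : ℝ≥0∞)) atTop (𝓝 1) := by
    rw [← ENNReal.coe_one]
    exact ENNReal.tendsto_coe.2 (tendsto_natCast_div_add_atTop 1)
  exact le_of_tendsto hlim ((eventually_gt_atTop 0).mono hr)

noncomputable def coverLength (N : ℕ) : ℝ := (∏ i ∈ range (N + 1), (2 * i + 1 : ℝ)) * weight N

lemma volume_image_digitSum_weight_le (N : ℕ) :
    volume (digitSum weight '' digits 2) ≤ ENNReal.ofReal (coverLength N) :=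
  calc volume (digitSum weight '' digits 2)
      ≤ (∏ i ∈ range (N + 1), (2 * i + 1) : ℕ) *
          ENNReal.ofReal (2 * ∑' i, ((i + (N + 1) : ℕ) : ℝ) * weight (i + (N + 1))) := by
        exact_mod_cast volume_image_digitSum_le (fun i => (weight_pos i).le)
          summable_natCast_mul_weight (N + 1)
    _ ≤ (∏ i ∈ range (N + 1), (2 * i + 1) : ℕ) * ENNReal.ofReal (weight N) := by
        gcongr
        linarith [tail_weight_le N]
    _ = ENNReal.ofReal (coverLength N) := by
        rw [coverLength, ENNReal.ofReal_mul (by positivity), ← ENNReal.ofReal_natCast]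
        push_cast
        rfl

lemma coverLength_succ (N : ℕ) :
    coverLength (N + 1) = coverLength N * ((2 * N + 3) / (2 * N + 4)) := by
  rw [coverLength, coverLength, prod_range_succ, weight, weight, pow_succ,
    Nat.factorial_succ (N + 1)]
  push_cast
  field_simp
  ring

lemma coverLength_sq_le (N : ℕ) : coverLength N ^ 2 ≤ 3 / (2 * N + 3) := by
  induction N with
  | zero => norm_num [coverLength, weight]
  | succ N ih =>
    rw [coverLength_succ, mul_pow]
    calc coverLength N ^ 2 * ((2 * N + 3) / (2 * N + 4)) ^ 2
        ≤ 3 / (2 * N + 3) * ((2 * N + 3) / (2 * N + 4)) ^ 2 := by gcongr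
      _ ≤ 3 / (2 * ((N + 1 : ℕ) : ℝ) + 3) := by
        push_cast
        rw [div_pow, div_mul_div_comm, div_le_div_iff₀ (by positivity) (by positivity)]
        nlinarith

lemma tendsto_coverLength : Tendsto coverLength atTop (𝓝 0) := by
  have hlim : Tendsto (fun N : ℕ => 3 / (2 * (N : ℝ) + 3)) atTop (𝓝 0) :=
    tendsto_const_nhds.div_atTop (tendsto_atTop_add_const_right _ _
      (tendsto_natCast_atTop_atTop.const_mul_atTop two_pos))
  refine squeeze_zero_norm (fun N => Real.abs_le_sqrt (coverLength_sq_le N)) ?_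
  simpa only [Real.sqrt_zero, Function.comp_def] using (Real.continuous_sqrt.tendsto 0).comp hlim

lemma volume_image_digitSum_weight_eq_zero : volume (digitSum weight '' digits 2) = 0 :=
  nonpos_iff_eq_zero.1 <| ge_of_tendsto'
    (by simpa using ENNReal.tendsto_ofReal tendsto_coverLength) volume_image_digitSum_weight_le

lemma setOf_eq_image_digitSum_weight :
    {x : ℝ | ∃ a : ℕ → ℕ, (∀ i, a i ≤ i) ∧
        x = ∑' i : ℕ, (a i : ℝ) / (2 ^ i * (Nat.factorial (i + 1) : ℝ))} =
      digitSum weight '' digits 1 := by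
  ext x
  simp only [mem_image, digits, one_mul, digitSum, weight, div_eq_mul_inv]
  exact exists_congr fun a => and_congr_right fun _ => eq_comm

end FactorialDigits

/-- The set `E = { ∑ᵢ aᵢ/(2ⁱ (i+1)!) : aᵢ ∈ {0,…,i} }` has Hausdorff dimension `1` while
`E + E` has Lebesgue measure zero. -/
theorem dimH_one_sumset_null :
    dimH {x : ℝ | ∃ a : ℕ → ℕ, (∀ i, a i ≤ i) ∧
        x = ∑' i : ℕ, (a i : ℝ) / (2 ^ i * (Nat.factorial (i + 1) : ℝ))} = 1 ∧
    volume ({x : ℝ | ∃ a : ℕ → ℕ, (∀ i, a i ≤ i) ∧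
        x = ∑' i : ℕ, (a i : ℝ) / (2 ^ i * (Nat.factorial (i + 1) : ℝ))} +
      {x : ℝ | ∃ a : ℕ → ℕ, (∀ i, a i ≤ i) ∧
        x = ∑' i : ℕ, (a i : ℝ) / (2 ^ i * (Nat.factorial (i + 1) : ℝ))}) = 0 := by
  rw [FactorialDigits.setOf_eq_image_digitSum_weight]
  refine ⟨le_antisymm ((dimH_mono (subset_univ _)).trans_eq Real.dimH_univ)
    FactorialDigits.one_le_dimH_image_digitSum_weight, measure_mono_null
    (FactorialDigits.image_digitSum_add_subset (fun i => (FactorialDigits.weight_pos i).le)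
      FactorialDigits.summable_natCast_mul_weight)
    FactorialDigits.volume_image_digitSum_weight_eq_zero⟩
end

section
/- The set of real numbers in [0,1] whose expansion in the generalized base (2d)_{d≥2} = (4,6,8,…) omits the maximal digit at every position (i.e., digit at position i lies in {0,…,2i} rather than {0,…,2i+1}) has Lebesgue measure ∏_{i≥2}(1 − 1/(2i)) = 0. -/
/-!
Keeping only the first `m` digits covers the set by `∏_{i<m} (2i+1)` intervals, each as long as
the largest possible tail `∑_{i≥m} (2i+1)/(2^i (i+1)!) = 2/(2^m m!)` (a telescoping sum). The
total length is `2 ∏_{i<m} (1 - 1/(2i+2)) ≤ 2 exp(-½ ∑_{i<m} 1/(i+1))`, which tends to `0`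
because the harmonic series diverges.
-/

open MeasureTheory Finset Filter Topology

theorem Real.prod_one_sub_le_exp_neg_sum {ι : Type*} (s : Finset ι) {f : ι → ℝ}
    (hf : ∀ i, f i ≤ 1) : ∏ i ∈ s, (1 - f i) ≤ Real.exp (-∑ i ∈ s, f i) := by
  rw [← Finset.sum_neg_distrib, Real.exp_sum]
  exact Finset.prod_le_prod (fun i _ => sub_nonneg.2 (hf i)) fun i _ => Real.one_sub_le_exp_neg _

theorem tendsto_prod_one_sub_atTop_zero {f : ℕ → ℝ} (hf : ∀ i, f i ≤ 1)
    (hsum : Tendsto (fun n => ∑ i ∈ range n, f i) atTop atTop) :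
    Tendsto (fun n => ∏ i ∈ range n, (1 - f i)) atTop (𝓝 0) :=
  squeeze_zero (fun _ => prod_nonneg fun i _ => sub_nonneg.2 (hf i))
    (fun _ => Real.prod_one_sub_le_exp_neg_sum _ hf)
    (Real.tendsto_exp_neg_atTop_nhds_zero.comp hsum)

def digitSet (w : ℕ → ℝ) (b : ℕ → ℕ) : Set ℝ :=
  {x | ∃ c : ℕ → ℕ, (∀ i, c i ≤ b i) ∧ x = ∑' i, (c i : ℝ) * w i}

section DigitSet

variable {w : ℕ → ℝ} {b : ℕ → ℕ}

theorem digitSet_subset_iUnion_Icc (hw : ∀ i, 0 ≤ w i) (hb : Summable fun i => (b i : ℝ) * w i)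
    (m : ℕ) : digitSet w b ⊆ ⋃ d : (i : Fin m) → Fin (b i + 1),
      Set.Icc (∑ i, (d i : ℝ) * w i) (∑ i, (d i : ℝ) * w i + ∑' i, (b (i + m) : ℝ) * w (i + m)) := by
  rintro x ⟨c, hc, rfl⟩
  have hle : ∀ i, (c i : ℝ) * w i ≤ b i * w i := fun i =>
    mul_le_mul_of_nonneg_right (by exact_mod_cast hc i) (hw i)
  have hnonneg : ∀ i, 0 ≤ (c i : ℝ) * w i := fun i => mul_nonneg (Nat.cast_nonneg _) (hw i)
  have hcs : Summable fun i => (c i : ℝ) * w i := hb.of_nonneg_of_le hnonneg hle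
  have htail : ∑' i, (c (i + m) : ℝ) * w (i + m) ≤ ∑' i, (b (i + m) : ℝ) * w (i + m) :=
    ((summable_nat_add_iff m).2 hcs).tsum_le_tsum (fun i => hle _) ((summable_nat_add_iff m).2 hb)
  refine Set.mem_iUnion.2 ⟨fun i => ⟨c i, Nat.lt_succ_of_le (hc i)⟩, ?_⟩
  rw [← hcs.sum_add_tsum_nat_add m, Fin.sum_univ_eq_sum_range (fun i => (c i : ℝ) * w i)]
  exact ⟨le_add_of_nonneg_right (tsum_nonneg fun i => hnonneg _), by gcongr⟩

theorem volume_digitSet_le (hw : ∀ i, 0 ≤ w i) (hb : Summable fun i => (b i : ℝ) * w i)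
    (m : ℕ) : volume (digitSet w b) ≤
      ENNReal.ofReal ((∏ i ∈ range m, (b i + 1 : ℝ)) * ∑' i, (b (i + m) : ℝ) * w (i + m)) := by
  set T := ∑' i, (b (i + m) : ℝ) * w (i + m)
  have hcard : (Fintype.card ((i : Fin m) → Fin (b i + 1)) : ℝ) = ∏ i ∈ range m, (b i + 1 : ℝ) := by
    rw [Fintype.card_pi]
    push_cast [Fintype.card_fin]
    exact Fin.prod_univ_eq_prod_range (fun i => (b i + 1 : ℝ)) m
  calc volume (digitSet w b)
      ≤ ∑ d : (i : Fin m) → Fin (b i + 1), volume (Set.Icc (∑ i, (d i : ℝ) * w i)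
          (∑ i, (d i : ℝ) * w i + T)) :=
        (measure_mono (digitSet_subset_iUnion_Icc hw hb m)).trans (measure_iUnion_fintype_le _ _)
    _ = ENNReal.ofReal ((∏ i ∈ range m, (b i + 1 : ℝ)) * T) := by
        simp only [Real.volume_Icc, add_sub_cancel_left, sum_const, card_univ, nsmul_eq_mul]
        rw [← hcard, ENNReal.ofReal_mul (Nat.cast_nonneg _), ENNReal.ofReal_natCast]

end DigitSet

section PlaceValue

open Nat

/-- `2 ^ i * (i + 1)! = 4 * 6 * ⋯ * (2 * i + 2)`, the product of the first `i` bases. -/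
noncomputable def placeValue (i : ℕ) : ℝ := (2 ^ i * (i + 1)! : ℝ)⁻¹

theorem placeValue_nonneg (i : ℕ) : 0 ≤ placeValue i := by
  unfold placeValue; positivity

theorem two_mul_add_one_mul_placeValue (i : ℕ) :
    (2 * i + 1 : ℝ) * placeValue i = 2 / (2 ^ i * i !) - 2 / (2 ^ (i + 1) * (i + 1)!) := by
  have hi : (i ! : ℝ) ≠ 0 := by positivity
  rw [placeValue, factorial_succ]
  push_cast
  field_simp
  ring

theorem sum_range_two_mul_mul_placeValue_le (m n : ℕ) :
    ∑ i ∈ range n, ((2 * (i + m) : ℕ) : ℝ) * placeValue (i + m) ≤ 2 / (2 ^ m * m !) :=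
  calc ∑ i ∈ range n, ((2 * (i + m) : ℕ) : ℝ) * placeValue (i + m)
      ≤ ∑ i ∈ range n, (2 * ((i + m : ℕ) : ℝ) + 1) * placeValue (i + m) := by
        gcongr with i
        · exact placeValue_nonneg _
        · push_cast; linarith
    _ = 2 / (2 ^ m * m !) - 2 / (2 ^ (n + m) * (n + m)!) := by
        simp_rw [two_mul_add_one_mul_placeValue]
        simpa only [zero_add, add_right_comm _ 1 m] using
          sum_range_sub' (fun i => 2 / (2 ^ (i + m) * ((i + m)! : ℝ))) n
    _ ≤ 2 / (2 ^ m * m !) := sub_le_self _ (by positivity)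

theorem prod_mul_two_div_eq (m : ℕ) :
    (∏ i ∈ range m, ((2 * i : ℕ) + 1 : ℝ)) * (2 / (2 ^ m * m !)) =
      2 * ∏ i ∈ range m, (1 - 1 / (2 * (i + 1) : ℝ)) := by
  have hden : (2 : ℝ) ^ m * m ! = ∏ i ∈ range m, (2 * (i + 1) : ℝ) := by
    rw [prod_mul_distrib, prod_const, card_range, ← prod_range_add_one_eq_factorial]
    push_cast; rfl
  have hfac : ∀ i : ℕ, (1 - 1 / (2 * (i + 1) : ℝ)) = (2 * i + 1) / (2 * (i + 1)) := fun i => by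
    field_simp; ring
  rw [hden, prod_congr rfl fun i _ => hfac i, prod_div_distrib]
  push_cast
  ring

end PlaceValue

theorem tendsto_sum_range_one_div_two_mul_succ_atTop :
    Tendsto (fun n => ∑ i ∈ range n, 1 / (2 * (i + 1) : ℝ)) atTop atTop := by
  have h := Real.tendsto_sum_range_one_div_nat_succ_atTop.const_mul_atTop (one_half_pos (α := ℝ))
  refine h.congr fun n => ?_
  rw [mul_sum]
  exact sum_congr rfl fun i _ => by field_simp

/-- The set of reals in `[0,1]` whose expansion in the generalized base `(4,6,8,…)` omits
the maximal digit at every position (digit at position `i` lies in `{0,…,2i}` rather than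
`{0,…,2i+1}`) has Lebesgue measure zero. -/
theorem measure_avoid_top_digit_zero :
    volume {x : ℝ | ∃ c : ℕ → ℕ, (∀ i, c i ≤ 2 * i) ∧
        x = ∑' i : ℕ, (c i : ℝ) / (2 ^ i * (Nat.factorial (i + 1) : ℝ))} = 0 := by
  have hset : {x : ℝ | ∃ c : ℕ → ℕ, (∀ i, c i ≤ 2 * i) ∧
      x = ∑' i : ℕ, (c i : ℝ) / (2 ^ i * (Nat.factorial (i + 1) : ℝ))} =
      digitSet placeValue (2 * ·) := by
    simp only [digitSet, placeValue, div_eq_mul_inv]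
  have hsummable : Summable fun i => ((2 * i : ℕ) : ℝ) * placeValue i :=
    summable_of_sum_range_le (fun i => mul_nonneg (Nat.cast_nonneg _) (placeValue_nonneg i))
      (by simpa using sum_range_two_mul_mul_placeValue_le 0)
  have hbound (m : ℕ) : volume (digitSet placeValue (2 * ·)) ≤
      ENNReal.ofReal (2 * ∏ i ∈ range m, (1 - 1 / (2 * (i + 1) : ℝ))) := by
    refine (volume_digitSet_le placeValue_nonneg hsummable m).trans (ENNReal.ofReal_le_ofReal ?_)
    rw [← prod_mul_two_div_eq]
    gcongr
    exact Real.tsum_le_of_sum_range_le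
      (fun i => mul_nonneg (Nat.cast_nonneg _) (placeValue_nonneg _))
      (sum_range_two_mul_mul_placeValue_le m)
  have hlim : Tendsto (fun m => ENNReal.ofReal (2 * ∏ i ∈ range m, (1 - 1 / (2 * (i + 1) : ℝ))))
      atTop (𝓝 0) := by
    simpa using ENNReal.tendsto_ofReal <| (tendsto_prod_one_sub_atTop_zero (fun i => by bound)
      tendsto_sum_range_one_div_two_mul_succ_atTop).const_mul 2
  rw [hset]
  exact le_antisymm (ge_of_tendsto' hlim hbound) bot_le
end

section
/- There exists a subset E of [0,1] with Hausdorff dimension 1/2 such that E + E = [0,1]. -/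
/-!
Write reals in the mixed radix `N k = 2 (k + 2)² + 1` and let `E` consist of the expansions whose
`k`-th digit lies in `sqBasis (k + 2)`, a set of `O(k)` numbers `≤ (k + 2)²` whose pairwise sums
cover `{0, …, 2 (k + 2)²}`. Adding two such expansions never carries, so `E + E = [0, 1]`.

The first `n` digits of a point of `E` locate it in an interval of length `1 / (2 ∏_{j<n} N j)`, and
there are at most `∏_{j<n} (3 j + 7)` such intervals; for `d > 1/2` this makes `μH[d] E = 0`.

Conversely, the digits `< k + 2` all lie in `sqBasis (k + 2)`. Rereading them in the radix `k + 2`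
maps this part of `E` onto `[0, 1]`. Two such expansions first differing at place `m` are at
distance `≥ 1 / (2 ∏_{j≤m} N j)`, while their images are at distance `≤ 1 / (m + 1)!`; as
`N j = O(j²)`, the map is Hölder of every exponent `< 1/2`, whence `dimH E ≥ 1/2`.
-/

open MeasureTheory Pointwise Filter Finset Topology NNReal ENNReal

lemma Function.exists_first_ne {α : Type*} {c c' : ℕ → α} (h : c ≠ c') :
    ∃ m, c m ≠ c' m ∧ ∀ k < m, c k = c' k := by
  classical
  have hex := Function.ne_iff.1 h
  exact ⟨Nat.find hex, Nat.find_spec hex, fun k hk ↦ not_not.1 (Nat.find_min hex hk)⟩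

lemma ceil_mul_natCast_sub_one_mem_Ico (y : ℝ) {n : ℕ} (hn : 0 < n) :
    ⌈y * n⌉ - 1 ∈ Set.Ico (n * (⌈y⌉ - 1)) (n * (⌈y⌉ - 1) + n) := by
  have hn' : (0 : ℝ) < n := mod_cast hn
  constructor
  · have : ((n * (⌈y⌉ - 1) : ℤ) : ℝ) < y * n := by
      push_cast
      nlinarith [Int.ceil_lt_add_one y]
    linarith [Int.lt_ceil.2 this]
  · have : ⌈y * n⌉ ≤ n * ⌈y⌉ := Int.ceil_le.2 (by push_cast; nlinarith [Int.le_ceil y])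
    linarith

lemma tendsto_zero_of_ratio_tendsto_zero {f : ℕ → ℝ} (hf : ∀ n, 0 < f n)
    (h : Tendsto (fun n ↦ f (n + 1) / f n) atTop (𝓝 0)) : Tendsto f atTop (𝓝 0) :=
  (summable_of_ratio_test_tendsto_lt_one zero_lt_one (.of_forall fun n ↦ (hf n).ne') <| by
    simpa only [Real.norm_eq_abs, abs_of_pos (hf _)] using h).tendsto_atTop_zero

lemma tendsto_natCast_add_two_rpow {e : ℝ} (he : e < 0) :
    Tendsto (fun n : ℕ ↦ ((n : ℝ) + 2) ^ e) atTop (𝓝 0) := by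
  simpa [Function.comp_def] using (tendsto_rpow_neg_atTop (neg_pos.2 he)).comp
    (tendsto_atTop_add_const_right _ 2 tendsto_natCast_atTop_atTop)

lemma hausdorffMeasure_eq_zero_of_covers {X : Type*} [EMetricSpace X] [MeasurableSpace X]
    [BorelSpace X] {ι : ℕ → Type*} [∀ n, Fintype (ι n)] {d : ℝ} (hd : 0 ≤ d) {s : Set X}
    {r : ℕ → ℝ} (hr₀ : ∀ n, 0 ≤ r n) (hr : Tendsto r atTop (𝓝 0)) (t : ∀ n, ι n → Set X)
    (ht : ∀ n i, Metric.ediam (t n i) ≤ ENNReal.ofReal (r n)) (hst : ∀ n, s ⊆ ⋃ i, t n i)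
    (hlim : Tendsto (fun n ↦ Fintype.card (ι n) * r n ^ d) atTop (𝓝 0)) : μH[d] s = 0 := by
  refine le_zero_iff.1 ((Measure.hausdorffMeasure_le_liminf_sum d s _
    (by simpa using ENNReal.tendsto_ofReal hr) t (.of_forall (ht ·)) (.of_forall hst)).trans ?_)
  have hsum : ∀ n, ∑ i, Metric.ediam (t n i) ^ d ≤ ENNReal.ofReal (Fintype.card (ι n) * r n ^ d) :=
    fun n ↦ calc ∑ i, Metric.ediam (t n i) ^ d ≤ ∑ _i : ι n, ENNReal.ofReal (r n) ^ d :=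
          sum_le_sum fun i _ ↦ ENNReal.rpow_le_rpow (ht n i) hd
      _ = _ := by
          rw [sum_const, card_univ, nsmul_eq_mul, ENNReal.ofReal_rpow_of_nonneg (hr₀ n) hd,
            ENNReal.ofReal_mul (by positivity), ENNReal.ofReal_natCast]
  calc liminf (fun n ↦ ∑ i, Metric.ediam (t n i) ^ d) atTop
      ≤ liminf (fun n ↦ ENNReal.ofReal (Fintype.card (ι n) * r n ^ d)) atTop :=
        liminf_le_liminf (.of_forall hsum)
    _ = 0 := by simpa using (ENNReal.tendsto_ofReal hlim).liminf_eq

lemma le_dimH_of_holderOnWith {X Y : Type*} [EMetricSpace X] [EMetricSpace Y] {s : Set X}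
    {f : X → Y} {D : ℝ≥0∞} (hf : 1 ≤ dimH (f '' s))
    (h : ∀ r : ℝ≥0, 0 < r → (r : ℝ≥0∞) < D → ∃ C, HolderOnWith C r f s) : D ≤ dimH s := by
  refine ENNReal.le_of_forall_nnreal_lt fun r hr ↦ ?_
  rcases eq_or_ne r 0 with rfl | hr₀
  · simp
  obtain ⟨C, hC⟩ := h r (pos_iff_ne_zero.2 hr₀) hr
  have := hf.trans (hC.dimH_image_le (pos_iff_ne_zero.2 hr₀))
  rwa [ENNReal.le_div_iff_mul_le (Or.inl (coe_ne_zero.2 hr₀)) (Or.inl coe_ne_top), one_mul] at this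

namespace MixedRadix

def scale (N : ℕ → ℕ) (k : ℕ) : ℕ := ∏ j ∈ range k, N j

noncomputable def value (N c : ℕ → ℕ) : ℝ := ∑' k, (c k : ℝ) / scale N (k + 1)

variable {N c c' : ℕ → ℕ}

@[simp] lemma scale_zero : scale N 0 = 1 := prod_range_zero _

lemma scale_succ (k : ℕ) : scale N (k + 1) = scale N k * N k := prod_range_succ _ _

lemma scale_add (m n : ℕ) : scale N (m + n) = scale N m * scale (fun j ↦ N (m + j)) n :=
  prod_range_add _ _ _

lemma cast_scale_pos (hN : ∀ k, 0 < N k) (k : ℕ) : (0 : ℝ) < scale N k :=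
  mod_cast prod_pos fun j _ ↦ hN j

lemma tendsto_scale_atTop (hN : ∀ k, 2 ≤ N k) :
    Tendsto (fun k ↦ (scale N k : ℝ)) atTop atTop := by
  refine tendsto_atTop_mono (fun k ↦ ?_) (tendsto_pow_atTop_atTop_of_one_lt one_lt_two)
  have : 2 ^ k ≤ scale N k := by
    simpa [scale] using pow_card_le_prod (range k) N 2 fun j _ ↦ hN j
  exact_mod_cast this

lemma sum_range_le (hc : ∀ k, c k < N k) (n : ℕ) :
    ∑ k ∈ range n, (c k : ℝ) / scale N (k + 1) ≤ 1 - (scale N n : ℝ)⁻¹ := by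
  induction n with
  | zero => simp
  | succ n ih =>
    have hs := cast_scale_pos (fun k ↦ Nat.zero_lt_of_lt (hc k)) n
    have hd : (c n : ℝ) + 1 ≤ N n := by exact_mod_cast hc n
    have hN : (0 : ℝ) < N n := by linarith [(c n).cast_nonneg (α := ℝ)]
    rw [sum_range_succ, scale_succ, Nat.cast_mul]
    calc _ ≤ 1 - (scale N n : ℝ)⁻¹ + (N n - 1) / (scale N n * N n) := by gcongr; linarith
      _ = 1 - (scale N n * N n : ℝ)⁻¹ := by field_simp; ring

lemma summable_of_lt (hc : ∀ k, c k < N k) :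
    Summable fun k ↦ (c k : ℝ) / scale N (k + 1) :=
  summable_of_sum_range_le (c := 1) (fun _ ↦ by positivity) fun n ↦
    (sum_range_le hc n).trans (by simp)

lemma value_nonneg : 0 ≤ value N c := tsum_nonneg fun _ ↦ by positivity

lemma value_le_one (hc : ∀ k, c k < N k) : value N c ≤ 1 :=
  Real.tsum_le_of_sum_range_le (fun _ ↦ by positivity) fun n ↦
    (sum_range_le hc n).trans (by simp)

lemma value_add (hc : ∀ k, c k < N k) (hc' : ∀ k, c' k < N k) :
    value N (c + c') = value N c + value N c' := by
  rw [value, value, value, ← (summable_of_lt hc).tsum_add (summable_of_lt hc')]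
  simp [add_div]

lemma value_le_half (hc : ∀ k, 2 * c k < N k) : value N c ≤ 1 / 2 := by
  have hc₁ : ∀ k, c k < N k := fun k ↦ by have := hc k; omega
  have := value_le_one (c := c + c) (by simpa [two_mul] using hc)
  rw [value_add hc₁ hc₁] at this
  linarith

lemma value_eq_sum_add_value_shift (hc : ∀ k, c k < N k) (m : ℕ) :
    value N c = ∑ k ∈ range m, (c k : ℝ) / scale N (k + 1)
      + value (fun j ↦ N (m + j)) (fun j ↦ c (m + j)) / scale N m := by
  rw [value, ← (summable_of_lt hc).sum_add_tsum_nat_add m, value, ← tsum_div_const]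
  congr 1
  refine tsum_congr fun j ↦ ?_
  rw [div_div, ← Nat.cast_mul, mul_comm, ← scale_add, add_comm j m, add_assoc]

lemma abs_value_sub_le (hc : ∀ k, c k < N k) (hc' : ∀ k, c' k < N k) {m : ℕ}
    (h : ∀ k < m, c k = c' k) : |value N c - value N c'| ≤ (scale N m : ℝ)⁻¹ := by
  rw [value_eq_sum_add_value_shift hc m, value_eq_sum_add_value_shift hc' m,
    sum_congr rfl fun k hk ↦ by rw [h k (mem_range.1 hk)], add_sub_add_left_eq_sub,
    div_sub_div_same, abs_div, Nat.abs_cast, div_eq_mul_inv]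
  refine mul_le_of_le_one_left (by positivity) (abs_sub_le_iff.2 ⟨?_, ?_⟩) <;>
    linarith [value_le_one fun j ↦ hc (m + j), value_le_one fun j ↦ hc' (m + j),
      value_nonneg (N := fun j ↦ N (m + j)) (c := fun j ↦ c (m + j)),
      value_nonneg (N := fun j ↦ N (m + j)) (c := fun j ↦ c' (m + j))]

lemma le_abs_value_sub (hc : ∀ k, 2 * c k < N k) (hc' : ∀ k, 2 * c' k < N k) {m : ℕ}
    (h : ∀ k < m, c k = c' k) (hm : c m ≠ c' m) :
    (2 * scale N (m + 1) : ℝ)⁻¹ ≤ |value N c - value N c'| := by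
  have hc₁ : ∀ k, c k < N k := fun k ↦ by have := hc k; omega
  have hc₁' : ∀ k, c' k < N k := fun k ↦ by have := hc' k; omega
  rw [value_eq_sum_add_value_shift hc₁ (m + 1), value_eq_sum_add_value_shift hc₁' (m + 1),
    sum_range_succ, sum_range_succ, sum_congr rfl fun k hk ↦ by rw [h k (mem_range.1 hk)]]
  set v := value (fun j ↦ N (m + 1 + j)) (fun j ↦ c (m + 1 + j))
  set v' := value (fun j ↦ N (m + 1 + j)) (fun j ↦ c' (m + 1 + j))
  have hv : |v - v'| ≤ 1 / 2 := by
    have : 0 ≤ v := value_nonneg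
    have : 0 ≤ v' := value_nonneg
    have : v ≤ 1 / 2 := value_le_half fun j ↦ hc (m + 1 + j)
    have : v' ≤ 1 / 2 := value_le_half fun j ↦ hc' (m + 1 + j)
    exact abs_sub_le_iff.2 ⟨by linarith, by linarith⟩
  have hdigit : (1 : ℝ) ≤ |(c m : ℝ) - c' m| := by
    have : (1 : ℤ) ≤ |(c m : ℤ) - c' m| := Int.one_le_abs (sub_ne_zero.2 (mod_cast hm))
    exact_mod_cast this
  have hS := cast_scale_pos (fun k ↦ Nat.zero_lt_of_lt (hc₁ k)) (m + 1)
  calc (2 * scale N (m + 1) : ℝ)⁻¹ = (1 - 1 / 2) / scale N (m + 1) := by ring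
    _ ≤ (|(c m : ℝ) - c' m| - |v - v'|) / scale N (m + 1) := by gcongr
    _ ≤ |(c m : ℝ) - c' m + (v - v')| / scale N (m + 1) := by
        gcongr; exact abs_sub_abs_le_abs_add _ _
    _ = |((c m : ℝ) - c' m + (v - v')) / scale N (m + 1)| := by rw [abs_div, abs_of_pos hS]
    _ = _ := by congr 1; ring

lemma eq_of_value_eq (hc : ∀ k, 2 * c k < N k) (hc' : ∀ k, 2 * c' k < N k)
    (h : value N c = value N c') : c = c' := by
  by_contra hne
  obtain ⟨m, hm, hlt⟩ := Function.exists_first_ne hne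
  have := le_abs_value_sub hc hc' hlt hm
  rw [h, sub_self, abs_zero] at this
  have := cast_scale_pos (fun k ↦ Nat.zero_lt_of_lt (hc k)) (m + 1)
  linarith [inv_pos.2 (by positivity : (0 : ℝ) < 2 * scale N (m + 1))]

lemma value_eq_of_tendsto {x : ℝ} {m : ℕ → ℤ} (hc : ∀ k, c k < N k) (hm₀ : m 0 = 0)
    (hcm : ∀ k, (c k : ℝ) = m (k + 1) - N k * m k)
    (hlim : Tendsto (fun n ↦ (m n : ℝ) / scale N n) atTop (𝓝 x)) : value N c = x := by
  have hS := cast_scale_pos fun k ↦ Nat.zero_lt_of_lt (hc k)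
  have hpartial : ∀ n, ∑ k ∈ range n, (c k : ℝ) / scale N (k + 1) = m n / scale N n := by
    intro n
    induction n with
    | zero => simp [hm₀]
    | succ n ih =>
      have : (0 : ℝ) < N n := mod_cast Nat.zero_lt_of_lt (hc n)
      rw [sum_range_succ, ih, hcm, scale_succ, Nat.cast_mul]
      field_simp [(hS n).ne']
      ring
  refine tendsto_nhds_unique ?_ hlim
  simpa only [hpartial, value] using (summable_of_lt hc).hasSum.tendsto_sum_nat

/-- The digits come from `m k = ⌈x * scale N k⌉ - 1`; with the ceiling rather than the floor,
`x = 1` needs no special treatment (but `x = 0` does). -/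
lemma exists_value_eq (hN : ∀ k, 2 ≤ N k) {x : ℝ} (hx : x ∈ Set.Icc 0 1) :
    ∃ c, (∀ k, c k < N k) ∧ value N c = x := by
  rcases hx.1.eq_or_lt with rfl | hx₀
  · exact ⟨0, fun k ↦ by have := hN k; simp only [Pi.zero_apply]; omega, by simp [value]⟩
  have hS := cast_scale_pos fun k ↦ zero_lt_two.trans_le (hN k)
  set m : ℕ → ℤ := fun k ↦ ⌈x * scale N k⌉ - 1
  have hm : ∀ k, (m k : ℝ) < x * scale N k ∧ x * scale N k ≤ m k + 1 := fun k ↦ by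
    simp only [m, Int.cast_sub, Int.cast_one, sub_add_cancel]
    exact ⟨by linarith [Int.ceil_lt_add_one (x * scale N k)], Int.le_ceil _⟩
  have hstep : ∀ k, m (k + 1) ∈ Set.Ico (N k * m k) (N k * m k + N k) := fun k ↦ by
    simpa only [m, scale_succ, Nat.cast_mul, mul_assoc] using
      ceil_mul_natCast_sub_one_mem_Ico (x * scale N k) (by have := hN k; omega : 0 < N k)
  set c : ℕ → ℕ := fun k ↦ (m (k + 1) - N k * m k).toNat
  have hcz : ∀ k, (c k : ℤ) = m (k + 1) - N k * m k := fun k ↦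
    Int.toNat_of_nonneg (by linarith [(hstep k).1])
  have hc : ∀ k, c k < N k := fun k ↦ by have := (hstep k).2; have := hcz k; omega
  have hm₀ : m 0 = 0 := by
    simp only [m, scale_zero, Nat.cast_one, mul_one, sub_eq_zero]
    exact Int.ceil_eq_iff.2 ⟨by norm_num [hx₀], mod_cast hx.2⟩
  refine ⟨c, hc, value_eq_of_tendsto hc hm₀ (fun k ↦ mod_cast hcz k) ?_⟩
  refine tendsto_iff_norm_sub_tendsto_zero.2 (squeeze_zero (fun _ ↦ norm_nonneg _) (fun n ↦ ?_)
    (tendsto_scale_atTop hN).inv_tendsto_atTop)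
  have : (m n : ℝ) / scale N n - x = (m n - x * scale N n) * (scale N n : ℝ)⁻¹ := by
    field_simp [(hS n).ne']
  rw [Real.norm_eq_abs, Pi.inv_apply, this, abs_mul, abs_of_pos (inv_pos.2 (hS n))]
  exact mul_le_of_le_one_left (inv_pos.2 (hS n)).le
    (abs_le.2 ⟨by linarith [hm n], by linarith [hm n]⟩)

end MixedRadix

def sqBasis (s : ℕ) : Finset ℕ :=
  range s ∪ (range (s + 1)).image (· * s) ∪ (range s).image (s ^ 2 - ·)

lemma le_sq_of_mem_sqBasis {s a : ℕ} (h : a ∈ sqBasis s) : a ≤ s ^ 2 := by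
  simp only [sqBasis, mem_union, mem_range, mem_image] at h
  rcases h with (h | ⟨b, hb, rfl⟩) | ⟨b, -, rfl⟩
  · nlinarith
  · rw [sq]; exact Nat.mul_le_mul_right _ (by omega)
  · omega

lemma card_sqBasis_le (s : ℕ) : #(sqBasis s) ≤ 3 * s + 1 := by
  refine (card_union_le _ _).trans ?_
  grw [card_union_le, card_image_le, card_image_le]
  simp only [card_range]
  omega

lemma exists_add_eq_of_le_two_mul_sq {s t : ℕ} (hs : 0 < s) (ht : t ≤ 2 * s ^ 2) :
    ∃ a ∈ sqBasis s, ∃ b ∈ sqBasis s, a + b = t := by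
  simp only [sqBasis, mem_union, mem_range, mem_image]
  rcases le_or_gt t (s ^ 2) with h | h
  · refine ⟨t % s, Or.inl (Or.inl (Nat.mod_lt _ hs)), t / s * s, Or.inl (Or.inr ⟨t / s, ?_, rfl⟩),
      Nat.mod_add_div' t s⟩
    exact Nat.lt_succ_of_le (Nat.div_le_of_le_mul (by rw [← sq]; exact h))
  · -- `t - s² = (q + 1) s - (s - e - 1)`: a multiple of `s` up to `s²`, minus a digit `< s`
    obtain ⟨q, e, he, hqe⟩ : ∃ q e, e < s ∧ t - s ^ 2 - 1 = s * q + e :=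
      ⟨_, _, Nat.mod_lt _ hs, (Nat.div_add_mod _ _).symm⟩
    have hq : q < s := by
      by_contra! hq
      have : s * s ≤ s * q := Nat.mul_le_mul_left _ hq
      have := sq s
      omega
    refine ⟨s ^ 2 - (s - e - 1), Or.inr ⟨s - e - 1, by omega, rfl⟩, (q + 1) * s,
      Or.inl (Or.inr ⟨q + 1, by omega, rfl⟩), ?_⟩
    have : s ≤ s ^ 2 := by nlinarith
    rw [add_mul, one_mul, mul_comm]
    omega

namespace SumsetHalfDim

open MixedRadix

def sqBasisBase (k : ℕ) : ℕ := 2 * (k + 2) ^ 2 + 1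

def sqBasisCantorSet : Set ℝ :=
  {x | ∃ c : ℕ → ℕ, (∀ k, c k ∈ sqBasis (k + 2)) ∧ value sqBasisBase c = x}

lemma add_lt_sqBasisBase {k a b : ℕ} (ha : a ∈ sqBasis (k + 2)) (hb : b ∈ sqBasis (k + 2)) :
    a + b < sqBasisBase k := by
  have := le_sq_of_mem_sqBasis ha
  have := le_sq_of_mem_sqBasis hb
  unfold sqBasisBase
  omega

lemma two_mul_lt_sqBasisBase {k a : ℕ} (ha : a ∈ sqBasis (k + 2)) : 2 * a < sqBasisBase k :=
  two_mul a ▸ add_lt_sqBasisBase ha ha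

lemma lt_sqBasisBase {k a : ℕ} (ha : a ∈ sqBasis (k + 2)) : a < sqBasisBase k :=
  (Nat.le_add_right a a).trans_lt (add_lt_sqBasisBase ha ha)

lemma two_le_sqBasisBase (k : ℕ) : 2 ≤ sqBasisBase k := by
  unfold sqBasisBase
  have := Nat.one_le_pow 2 (k + 2) (by omega)
  omega

lemma scale_sqBasisBase_pos (n : ℕ) : (0 : ℝ) < scale sqBasisBase n :=
  cast_scale_pos (fun k ↦ by unfold sqBasisBase; positivity) n

lemma sqBasisCantorSet_subset_Icc : sqBasisCantorSet ⊆ Set.Icc 0 1 := by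
  rintro _ ⟨c, hc, rfl⟩
  exact ⟨value_nonneg, value_le_one fun k ↦ lt_sqBasisBase (hc k)⟩

lemma sqBasisCantorSet_add_self : sqBasisCantorSet + sqBasisCantorSet = Set.Icc 0 1 := by
  refine (Set.add_subset_iff.2 ?_).antisymm fun z hz ↦ ?_
  · rintro _ ⟨c, hc, rfl⟩ _ ⟨c', hc', rfl⟩
    rw [← value_add (fun k ↦ lt_sqBasisBase (hc k)) fun k ↦ lt_sqBasisBase (hc' k)]
    exact ⟨value_nonneg, value_le_one fun k ↦ add_lt_sqBasisBase (hc k) (hc' k)⟩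
  obtain ⟨c, hc, rfl⟩ := exists_value_eq two_le_sqBasisBase hz
  choose a ha b hb hab using fun k ↦ exists_add_eq_of_le_two_mul_sq (by omega : 0 < k + 2)
    (show c k ≤ 2 * (k + 2) ^ 2 by have := hc k; unfold sqBasisBase at this; omega)
  refine ⟨_, ⟨a, ha, rfl⟩, _, ⟨b, hb, rfl⟩, ?_⟩
  change value _ a + value _ b = _
  rw [← value_add (fun k ↦ lt_sqBasisBase (ha k)) fun k ↦ lt_sqBasisBase (hb k)]
  exact congrArg _ (funext hab)

lemma tendsto_div_sqBasisBase_rpow {d : ℝ} (hd : 1 / 2 < d) :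
    Tendsto (fun n : ℕ ↦ (3 * n + 7 : ℝ) / (sqBasisBase n : ℝ) ^ d) atTop (𝓝 0) := by
  refine squeeze_zero (fun n ↦ by positivity) (fun n ↦ ?_)
    (by simpa using (tendsto_natCast_add_two_rpow (e := 1 - 2 * d) (by linarith)).const_mul 4)
  have hn : (0 : ℝ) < n + 2 := by positivity
  have hbase : ((n : ℝ) + 2) ^ (2 * d) ≤ (sqBasisBase n : ℝ) ^ d := by
    rw [Real.rpow_mul hn.le, Real.rpow_two]
    gcongr
    simp only [sqBasisBase]; push_cast; nlinarith
  calc (3 * n + 7 : ℝ) / (sqBasisBase n : ℝ) ^ d ≤ 4 * (n + 2) / ((n : ℝ) + 2) ^ (2 * d) :=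
        div_le_div₀ (by positivity) (by linarith) (by positivity) hbase
    _ = 4 * ((n : ℝ) + 2) ^ (1 - 2 * d) := by rw [Real.rpow_sub hn, Real.rpow_one]; ring

lemma tendsto_prod_mul_inv_scale_rpow {d : ℝ} (hd : 1 / 2 < d) :
    Tendsto (fun n ↦ (∏ j ∈ range n, (3 * j + 7 : ℝ)) * ((2 * scale sqBasisBase n : ℝ)⁻¹) ^ d)
      atTop (𝓝 0) := by
  have hS := scale_sqBasisBase_pos
  refine tendsto_zero_of_ratio_tendsto_zero (fun n ↦ by have := hS n; positivity)
    ((tendsto_div_sqBasisBase_rpow hd).congr fun n ↦ ?_)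
  have hb : (0 : ℝ) < sqBasisBase n := by unfold sqBasisBase; positivity
  have := hS n
  rw [prod_range_succ, scale_succ, Nat.cast_mul, ← mul_assoc, mul_inv,
    Real.mul_rpow (by positivity) (by positivity), Real.inv_rpow hb.le]
  field_simp

lemma hausdorffMeasure_sqBasisCantorSet_eq_zero {d : ℝ} (hd : 1 / 2 < d) :
    μH[d] sqBasisCantorSet = 0 := by
  set S : ℕ → ℝ := fun n ↦ scale sqBasisBase n
  have hS : ∀ n, 0 < S n := scale_sqBasisBase_pos
  let P (n : ℕ) := Fintype.piFinset fun j : Fin n ↦ sqBasis (j + 2)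
  let left (n : ℕ) (w : P n) : ℝ := ∑ j, (w.1 j : ℝ) / S (j + 1)
  refine hausdorffMeasure_eq_zero_of_covers (by linarith) (r := fun n ↦ (2 * S n)⁻¹)
    (fun n ↦ by have := hS n; positivity)
    ((tendsto_scale_atTop fun k ↦ ?_).const_mul_atTop two_pos).inv_tendsto_atTop
    (fun n w ↦ Set.Icc (left n w) (left n w + (2 * S n)⁻¹))
    (fun n w ↦ by rw [Real.ediam_Icc, add_sub_cancel_left]) (fun n ↦ ?_)
    (squeeze_zero (fun n ↦ by have := hS n; positivity) (fun n ↦ ?_)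
      (tendsto_prod_mul_inv_scale_rpow hd))
  · exact two_le_sqBasisBase k
  · rintro _ ⟨c, hc, rfl⟩
    refine Set.mem_iUnion.2 ⟨⟨fun j ↦ c j, Fintype.mem_piFinset.2 fun j ↦ hc j⟩, ?_⟩
    have hv := value_le_half fun j ↦ two_mul_lt_sqBasisBase (hc (n + j))
    rw [value_eq_sum_add_value_shift (fun k ↦ lt_sqBasisBase (hc k)) n, Set.mem_Icc,
      show left n _ = _ from Fin.sum_univ_eq_sum_range (fun k ↦ (c k : ℝ) / S (k + 1)) n]
    have := hS n
    constructor
    · have : 0 ≤ value (fun j ↦ sqBasisBase (n + j)) (fun j ↦ c (n + j)) / S n := by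
        have := value_nonneg (N := fun j ↦ sqBasisBase (n + j)) (c := fun j ↦ c (n + j))
        positivity
      linarith
    · have : value (fun j ↦ sqBasisBase (n + j)) (fun j ↦ c (n + j)) / S n ≤ (2 * S n)⁻¹ :=
        calc _ ≤ 1 / 2 / S n := by gcongr
          _ = (2 * S n)⁻¹ := by ring
      linarith
  · have hcard : Fintype.card (P n) ≤ ∏ j ∈ range n, (3 * j + 7) := by
      rw [Fintype.card_coe, Fintype.card_piFinset, ← Fin.prod_univ_eq_prod_range]
      exact prod_le_prod' fun j _ ↦ card_sqBasis_le _
    gcongr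
    exact_mod_cast hcard

lemma dimH_sqBasisCantorSet_le : dimH sqBasisCantorSet ≤ 1 / 2 :=
  dimH_le fun d hd ↦ le_of_not_gt fun hlt ↦ by
    have : (1 / 2 : ℝ) < d := by
      simpa using (ENNReal.toReal_lt_toReal (by simp) (by simp)).2 hlt
    simp [hausdorffMeasure_sqBasisCantorSet_eq_zero this] at hd

lemma tendsto_sqBasisBase_rpow_div {r : ℝ} (hr₀ : 0 ≤ r) (hr : r < 1 / 2) :
    Tendsto (fun m : ℕ ↦ (sqBasisBase (m + 1) : ℝ) ^ r / (m + 2)) atTop (𝓝 0) := by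
  refine squeeze_zero (fun n ↦ by positivity) (fun m ↦ ?_)
    (by simpa using (tendsto_natCast_add_two_rpow (e := 2 * r - 1) (by linarith)).const_mul (5 ^ r))
  have hm : (0 : ℝ) < m + 2 := by positivity
  have hbase : (sqBasisBase (m + 1) : ℝ) ^ r ≤ 5 ^ r * ((m : ℝ) + 2) ^ (2 * r) := by
    rw [Real.rpow_mul hm.le, Real.rpow_two, ← Real.mul_rpow (by norm_num) (by positivity)]
    gcongr
    simp only [sqBasisBase]; push_cast; nlinarith
  calc (sqBasisBase (m + 1) : ℝ) ^ r / (m + 2) ≤ 5 ^ r * ((m : ℝ) + 2) ^ (2 * r) / (m + 2) := by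
        gcongr
    _ = 5 ^ r * ((m : ℝ) + 2) ^ (2 * r - 1) := by rw [Real.rpow_sub_one hm.ne']; ring

lemma exists_rpow_scale_sqBasisBase_le {r : ℝ} (hr₀ : 0 ≤ r) (hr : r < 1 / 2) :
    ∃ C, ∀ m, (2 * scale sqBasisBase (m + 1) : ℝ) ^ r ≤ C * scale (· + 2) m := by
  have hS := scale_sqBasisBase_pos
  have hT := cast_scale_pos (N := (· + 2)) fun k ↦ by omega
  set u : ℕ → ℝ := fun m ↦ (2 * scale sqBasisBase (m + 1) : ℝ) ^ r / scale (· + 2) m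
  have hu : ∀ m, 0 < u m := fun m ↦ by have := hS (m + 1); have := hT m; positivity
  have hratio : ∀ m, (sqBasisBase (m + 1) : ℝ) ^ r / (m + 2) = u (m + 1) / u m := fun m ↦ by
    have := hS (m + 1)
    have := hT m
    have hb : (0 : ℝ) < sqBasisBase (m + 1) := by unfold sqBasisBase; positivity
    simp only [u]
    rw [scale_succ (N := sqBasisBase) (m + 1), scale_succ (N := (· + 2)) m, Nat.cast_mul,
      Nat.cast_mul, ← mul_assoc, Real.mul_rpow (by positivity) hb.le]
    push_cast
    field_simp
  obtain ⟨C, hC⟩ := (tendsto_zero_of_ratio_tendsto_zero hu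
    ((tendsto_sqBasisBase_rpow_div hr₀ hr).congr hratio)).bddAbove_range
  exact ⟨C, fun m ↦ (div_le_iff₀ (hT m)).1 (hC ⟨m, rfl⟩)⟩

def smallDigitSet : Set ℝ :=
  {x | ∃ c : ℕ → ℕ, (∀ k, c k < k + 2) ∧ value sqBasisBase c = x}

lemma two_mul_lt_sqBasisBase_of_lt {k a : ℕ} (ha : a < k + 2) : 2 * a < sqBasisBase k := by
  unfold sqBasisBase; nlinarith

lemma injective_value_sqBasisBase :
    Function.Injective fun c : {c : ℕ → ℕ // ∀ k, c k < k + 2} ↦ value sqBasisBase c :=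
  fun c c' h ↦ Subtype.ext <| eq_of_value_eq (fun k ↦ two_mul_lt_sqBasisBase_of_lt (c.2 k))
    (fun k ↦ two_mul_lt_sqBasisBase_of_lt (c'.2 k)) h

noncomputable def rebase : ℝ → ℝ :=
  Function.extend (fun c : {c : ℕ → ℕ // ∀ k, c k < k + 2} ↦ value sqBasisBase c)
    (fun c ↦ value (· + 2) c) 0

lemma rebase_value {c : ℕ → ℕ} (hc : ∀ k, c k < k + 2) :
    rebase (value sqBasisBase c) = value (· + 2) c :=
  injective_value_sqBasisBase.extend_apply _ _ ⟨c, hc⟩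

lemma Icc_subset_image_rebase : Set.Icc 0 1 ⊆ rebase '' smallDigitSet := fun _ hz ↦
  let ⟨c, hc, hcz⟩ := exists_value_eq (N := (· + 2)) (fun _ ↦ by omega) hz
  ⟨_, ⟨c, hc, rfl⟩, (rebase_value hc).trans hcz⟩

lemma holderOnWith_rebase {r : ℝ≥0} (hr : (r : ℝ) < 1 / 2) :
    ∃ C, HolderOnWith C r rebase smallDigitSet := by
  obtain ⟨C, hC⟩ := exists_rpow_scale_sqBasisBase_le r.coe_nonneg hr
  refine ⟨C.toNNReal, ?_⟩
  rintro _ ⟨c, hc, rfl⟩ _ ⟨c', hc', rfl⟩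
  rw [rebase_value hc, rebase_value hc']
  rcases eq_or_ne c c' with rfl | hne
  · simp
  obtain ⟨m, hm, hlt⟩ := Function.exists_first_ne hne
  have hsep := le_abs_value_sub (fun k ↦ two_mul_lt_sqBasisBase_of_lt (hc k))
    (fun k ↦ two_mul_lt_sqBasisBase_of_lt (hc' k)) hlt hm
  have hS := scale_sqBasisBase_pos (m + 1)
  have hT := cast_scale_pos (N := (· + 2)) (fun k ↦ by omega) m
  have hpow : (0 : ℝ) < (2 * scale sqBasisBase (m + 1) : ℝ) ^ (r : ℝ) := by positivity
  have hreal : |value (· + 2) c - value (· + 2) c'|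
      ≤ C * |value sqBasisBase c - value sqBasisBase c'| ^ (r : ℝ) :=
    calc _ ≤ (scale (· + 2) m : ℝ)⁻¹ := abs_value_sub_le hc hc' hlt
      _ ≤ C * ((2 * scale sqBasisBase (m + 1) : ℝ)⁻¹) ^ (r : ℝ) := by
        rw [Real.inv_rpow (by positivity), ← div_eq_mul_inv, le_div_iff₀ hpow, mul_comm,
          ← div_eq_mul_inv, div_le_iff₀ hT]
        exact hC m
      _ ≤ _ := by
        have : 0 ≤ C := nonneg_of_mul_nonneg_left ((hpow.trans_le (hC m)).le) hT
        gcongr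
  rw [edist_dist, edist_dist, Real.dist_eq, Real.dist_eq,
    ENNReal.ofReal_rpow_of_nonneg (abs_nonneg _) r.coe_nonneg]
  exact (ENNReal.ofReal_le_ofReal hreal).trans_eq (ENNReal.ofReal_mul' (by positivity))

lemma le_dimH_sqBasisCantorSet : 1 / 2 ≤ dimH sqBasisCantorSet := by
  have hIcc : dimH (Set.Icc (0 : ℝ) 1) = 1 := by
    rw [Real.dimH_of_nonempty_interior (by simp), Module.finrank_self, Nat.cast_one]
  refine (le_dimH_of_holderOnWith (hIcc ▸ dimH_mono Icc_subset_image_rebase)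
    fun r _ hr ↦ holderOnWith_rebase ?_).trans (dimH_mono ?_)
  · simpa using (ENNReal.toReal_lt_toReal (by simp) (by simp)).2 hr
  · rintro _ ⟨c, hc, rfl⟩
    exact ⟨c, fun k ↦ mem_union_left _ (mem_union_left _ (mem_range.2 (hc k))), rfl⟩

end SumsetHalfDim

/-- There exists a subset `E` of `[0,1]` of Hausdorff dimension `1/2` with `E + E = [0,1]`. -/
theorem exists_dimH_half_sumset_Icc :
    ∃ E : Set ℝ, E ⊆ Set.Icc 0 1 ∧ dimH E = 1 / 2 ∧ E + E = Set.Icc 0 1 :=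
  ⟨SumsetHalfDim.sqBasisCantorSet, SumsetHalfDim.sqBasisCantorSet_subset_Icc,
    SumsetHalfDim.dimH_sqBasisCantorSet_le.antisymm SumsetHalfDim.le_dimH_sqBasisCantorSet,
    SumsetHalfDim.sqBasisCantorSet_add_self⟩
end

section
/- For every h ∈ [0,1], there exists a subset E of [0,1] with Hausdorff dimension h such that E + E has positive Lebesgue measure if and only if h ∈ [1/2, 1]. -/
/-!
For `0 < h < 1` let `r = 2^(-1/h)` and let `C_r` be the Cantor set of sums `∑ aₙ rⁿ⁺¹` with binary
digits `aₙ`. Covering `C_r` by the `2ⁿ` intervals fixed by the first `n` digits, each of length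
`O(rⁿ)`, gives `dim C_r ≤ h` as `2 rʰ = 1`; since `r < 1/2`, points whose digits first differ at
place `n` are `≍ rⁿ` apart, so `∑ aₙ rⁿ⁺¹ ↦ ∑ aₙ 2⁻ⁿ⁻¹` is `h`-Hölder on `C_r` and maps it onto
`[0,1]`, giving `dim C_r ≥ h`. If moreover `h < 1/2`, then `r < 1/4` and `C_r + C_r` is covered by
`4ⁿ` intervals of length `O(rⁿ)`, hence is null. If `h ≥ 1/2`, add to a set of dimension `h` the
set `C_{1/4} ∪ 2 • C_{1/4}` of dimension `1/2`: splitting binary digits into odd and even places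
shows `C_{1/4} + 2 • C_{1/4} = [0,1]`.
-/

open MeasureTheory Set Filter Topology
open scoped ENNReal NNReal Pointwise

noncomputable def cantorSum (r : ℝ) (a : ℕ → Fin 2) : ℝ := ∑' n, (a n : ℝ) * r ^ (n + 1)

lemma Fin.natCast_val_mul_le {x : ℝ} (i : Fin 2) (hx : 0 ≤ x) : (i : ℝ) * x ≤ x :=
  mul_le_of_le_one_left hx (by exact_mod_cast Nat.le_of_lt_succ i.isLt)

section
variable {r : ℝ}

lemma hasSum_pow_succ (hr0 : 0 ≤ r) (hr1 : r < 1) :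
    HasSum (fun n : ℕ ↦ r ^ (n + 1)) (r / (1 - r)) := by
  simpa [pow_succ', div_eq_mul_inv] using (hasSum_geometric_of_lt_one hr0 hr1).mul_left r

lemma summable_cantorSum (hr0 : 0 ≤ r) (hr1 : r < 1) (a : ℕ → Fin 2) :
    Summable fun n ↦ (a n : ℝ) * r ^ (n + 1) :=
  (hasSum_pow_succ hr0 hr1).summable.of_nonneg_of_le (fun _ ↦ by positivity)
    fun _ ↦ Fin.natCast_val_mul_le _ (by positivity)

lemma cantorSum_mem_Icc (hr0 : 0 ≤ r) (hr1 : r < 1) (a : ℕ → Fin 2) :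
    cantorSum r a ∈ Icc 0 (r / (1 - r)) :=
  ⟨tsum_nonneg fun _ ↦ by positivity, (hasSum_pow_succ hr0 hr1).tsum_eq ▸
    (summable_cantorSum hr0 hr1 a).tsum_le_tsum (fun _ ↦ Fin.natCast_val_mul_le _ (by positivity))
      (hasSum_pow_succ hr0 hr1).summable⟩

lemma cantorSum_eq_sum_add (hr0 : 0 ≤ r) (hr1 : r < 1) (a : ℕ → Fin 2) (n : ℕ) :
    cantorSum r a = ∑ i ∈ Finset.range n, (a i : ℝ) * r ^ (i + 1) +
      r ^ n * cantorSum r (fun i ↦ a (i + n)) := by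
  rw [cantorSum, cantorSum, ← (summable_cantorSum hr0 hr1 a).sum_add_tsum_nat_add n,
    ← tsum_mul_left]
  exact congrArg _ (tsum_congr fun i ↦ by ring)

lemma abs_cantorSum_sub_cantorSum_le (hr0 : 0 ≤ r) (hr1 : r < 1) (a b : ℕ → Fin 2) :
    |cantorSum r a - cantorSum r b| ≤ r / (1 - r) := by
  have ha := cantorSum_mem_Icc hr0 hr1 a
  have hb := cantorSum_mem_Icc hr0 hr1 b
  simpa using abs_sub_le_of_le_of_le ha.1 ha.2 hb.1 hb.2

lemma cantorSum_sub_cantorSum (hr0 : 0 ≤ r) (hr1 : r < 1) {a b : ℕ → Fin 2} {n : ℕ}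
    (hab : ∀ i < n, a i = b i) :
    cantorSum r a - cantorSum r b =
      r ^ n * (cantorSum r (fun i ↦ a (i + n)) - cantorSum r (fun i ↦ b (i + n))) := by
  rw [cantorSum_eq_sum_add hr0 hr1 a n, cantorSum_eq_sum_add hr0 hr1 b n,
    Finset.sum_congr rfl fun i hi ↦ by rw [hab i (Finset.mem_range.1 hi)]]
  ring

lemma le_abs_cantorSum_sub (hr0 : 0 ≤ r) (hr1 : r < 1) {a b : ℕ → Fin 2} {n : ℕ}
    (hab : ∀ i < n, a i = b i) (hn : a n ≠ b n) :
    r ^ (n + 1) * ((1 - 2 * r) / (1 - r)) ≤ |cantorSum r a - cantorSum r b| := by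
  have hdigit : |(a n : ℝ) - b n| = 1 := by
    revert hn; generalize a n = x; generalize b n = y; fin_cases x <;> fin_cases y <;> simp
  set t := cantorSum r (fun i ↦ a (i + 1 + n)) - cantorSum r (fun i ↦ b (i + 1 + n))
  have htail : |t| ≤ r / (1 - r) := abs_cantorSum_sub_cantorSum_le hr0 hr1 _ _
  rw [cantorSum_sub_cantorSum hr0 hr1 hab, cantorSum_eq_sum_add hr0 hr1 _ 1,
    cantorSum_eq_sum_add hr0 hr1 (fun i ↦ b (i + n)) 1]
  simp only [Finset.sum_range_one, zero_add, pow_one]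
  rw [show ∀ x y : ℝ, r ^ n * (x * r + r * cantorSum r (fun i ↦ a (i + 1 + n)) -
      (y * r + r * cantorSum r (fun i ↦ b (i + 1 + n)))) = r ^ (n + 1) * ((x - y) - -t) from
    fun x y ↦ by ring, abs_mul, abs_of_nonneg (by positivity)]
  gcongr
  have h1r : 0 < 1 - r := by linarith
  calc (1 - 2 * r) / (1 - r) = 1 - r / (1 - r) := by field_simp; ring
    _ ≤ |(a n : ℝ) - b n| - |-t| := by rw [hdigit, abs_neg]; linarith
    _ ≤ _ := abs_sub_abs_le_abs_sub _ _

lemma range_cantorSum_subset_iUnion_Icc (hr0 : 0 ≤ r) (hr1 : r < 1) (n : ℕ) :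
    ∃ x : (Fin n → Fin 2) → ℝ,
      range (cantorSum r) ⊆ ⋃ w, Icc (x w) (x w + r ^ n * (r / (1 - r))) := by
  refine ⟨fun w ↦ ∑ i, (w i : ℝ) * r ^ ((i : ℕ) + 1), ?_⟩
  rintro _ ⟨a, rfl⟩
  have ha := cantorSum_mem_Icc hr0 hr1 fun i ↦ a (i + n)
  refine mem_iUnion.2 ⟨fun i ↦ a i, ?_⟩
  rw [cantorSum_eq_sum_add hr0 hr1 a n,
    ← Fin.sum_univ_eq_sum_range (fun i ↦ (a i : ℝ) * r ^ (i + 1))]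
  simp only [mem_Icc, le_add_iff_nonneg_right, add_le_add_iff_left]
  exact ⟨mul_nonneg (pow_nonneg hr0 n) ha.1, mul_le_mul_of_nonneg_left ha.2 (pow_nonneg hr0 n)⟩

lemma dimH_range_cantorSum_le (hr0 : 0 ≤ r) (hr1 : r < 1) {d : ℝ≥0} (hd : r ^ (d : ℝ) = 2⁻¹) :
    dimH (range (cantorSum r)) ≤ d := by
  choose x hx using range_cantorSum_subset_iUnion_Icc hr0 hr1
  set ℓ : ℕ → ℝ := fun n ↦ r ^ n * (r / (1 - r))
  have hℓ : Tendsto ℓ atTop (𝓝 0) := by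
    simpa using (tendsto_pow_atTop_nhds_zero_of_lt_one hr0 hr1).mul_const (r / (1 - r))
  have hsum : ∀ n, ∑ w, Metric.ediam (Icc (x n w) (x n w + ℓ n)) ^ (d : ℝ) =
      ENNReal.ofReal ((r / (1 - r)) ^ (d : ℝ)) := by
    intro n
    have h1r : 0 < 1 - r := by linarith
    have hℓd : ℓ n ^ (d : ℝ) = 2⁻¹ ^ n * (r / (1 - r)) ^ (d : ℝ) := by
      rw [Real.mul_rpow (by positivity) (by positivity), ← Real.rpow_pow_comm hr0, hd]
    simp only [Real.ediam_Icc, add_sub_cancel_left, Finset.sum_const, Finset.card_univ,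
      Fintype.card_fun, Fintype.card_fin, nsmul_eq_mul]
    rw [ENNReal.ofReal_rpow_of_nonneg (by positivity) d.coe_nonneg, hℓd, ← ENNReal.ofReal_natCast,
      ← ENNReal.ofReal_mul (by positivity), ← mul_assoc]
    push_cast
    rw [← mul_pow, mul_inv_cancel₀ two_ne_zero, one_pow, one_mul]
  have hμ := Measure.hausdorffMeasure_le_liminf_sum (d : ℝ) _ (fun n ↦ ENNReal.ofReal (ℓ n))
    (ENNReal.ofReal_zero ▸ ENNReal.tendsto_ofReal hℓ) (fun n w ↦ Icc (x n w) (x n w + ℓ n))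
    (.of_forall fun n w ↦ by simp) (.of_forall hx)
  simp only [hsum, liminf_const] at hμ
  exact dimH_le_of_hausdorffMeasure_ne_top (ne_top_of_le_ne_top ENNReal.ofReal_ne_top hμ)

lemma abs_ofDigits_sub_le_mul_abs_cantorSum_sub_rpow (hr0 : 0 ≤ r) (hr : r < 1 / 2) {d : ℝ≥0}
    (hd : r ^ (d : ℝ) = 2⁻¹) (a b : ℕ → Fin 2) :
    |Real.ofDigits a - Real.ofDigits b| ≤
      2 / ((1 - 2 * r) / (1 - r)) ^ (d : ℝ) * |cantorSum r a - cantorSum r b| ^ (d : ℝ) := by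
  set γ := (1 - 2 * r) / (1 - r)
  have hγ : 0 < γ := div_pos (by linarith) (by linarith)
  rcases eq_or_ne a b with rfl | hab
  · simp only [sub_self, abs_zero]
    positivity
  set n := PiNat.firstDiff a b
  have hagree : ∀ i < n, a i = b i := fun i hi ↦ PiNat.apply_eq_of_lt_firstDiff hi
  have hsep : (r ^ (n + 1) * γ) ^ (d : ℝ) ≤ |cantorSum r a - cantorSum r b| ^ (d : ℝ) :=
    Real.rpow_le_rpow (by positivity)
      (le_abs_cantorSum_sub hr0 (by linarith) hagree (PiNat.apply_firstDiff_ne hab)) d.coe_nonneg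
  rw [Real.mul_rpow (by positivity) hγ.le, ← Real.rpow_pow_comm hr0, hd] at hsep
  calc |Real.ofDigits a - Real.ofDigits b| ≤ ((2 : ℕ) ^ n : ℝ)⁻¹ :=
        Real.abs_ofDigits_sub_ofDigits_le hagree
    _ = 2 / γ ^ (d : ℝ) * (2⁻¹ ^ (n + 1) * γ ^ (d : ℝ)) := by
        field_simp
        push_cast
        rw [← pow_succ, ← mul_pow]
        norm_num
    _ ≤ _ := by gcongr

lemma le_dimH_range_cantorSum (hr0 : 0 ≤ r) (hr : r < 1 / 2) {d : ℝ≥0} (hd : r ^ (d : ℝ) = 2⁻¹) :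
    (d : ℝ≥0∞) ≤ dimH (range (cantorSum r)) := by
  have hd0 : 0 < d := pos_iff_ne_zero.2 (by rintro rfl; norm_num at hd)
  set C : ℝ := 2 / ((1 - 2 * r) / (1 - r)) ^ (d : ℝ)
  have hC : 0 ≤ C :=
    div_nonneg zero_le_two (Real.rpow_nonneg (div_nonneg (by linarith) (by linarith)) _)
  set f : ℝ → ℝ := fun x ↦ Real.ofDigits (Function.invFun (cantorSum r) x)
  -- Points with equal `cantorSum r` have equal `Real.ofDigits` by the Hölder bound, so `f` does
  -- not need `cantorSum r` to be injective.
  have hf : ∀ a, f (cantorSum r a) = Real.ofDigits a := fun a ↦ by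
    have := abs_ofDigits_sub_le_mul_abs_cantorSum_sub_rpow hr0 hr hd
      (Function.invFun (cantorSum r) (cantorSum r a)) a
    rwa [Function.invFun_eq (f := cantorSum r) ⟨a, rfl⟩, sub_self, abs_zero,
      Real.zero_rpow (by positivity), mul_zero, abs_nonpos_iff, sub_eq_zero] at this
  have hHolder : HolderOnWith C.toNNReal d f (range (cantorSum r)) := by
    rintro _ ⟨a, rfl⟩ _ ⟨b, rfl⟩
    rw [hf, hf, edist_dist, edist_dist, Real.dist_eq, Real.dist_eq,
      ENNReal.ofReal_rpow_of_nonneg (abs_nonneg _) d.coe_nonneg]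
    exact (ENNReal.ofReal_le_ofReal
      (abs_ofDigits_sub_le_mul_abs_cantorSum_sub_rpow hr0 hr hd a b)).trans_eq
      (ENNReal.ofReal_mul hC)
  have hIcc : Icc (0 : ℝ) 1 ⊆ f '' range (cantorSum r) := by
    intro x hx
    obtain ⟨a, -, rfl⟩ := Real.ofDigits_SurjOn (b := 2) one_lt_two hx
    exact ⟨cantorSum r a, mem_range_self a, hf a⟩
  have := (dimH_mono hIcc).trans (hHolder.dimH_image_le hd0)
  rw [Real.dimH_of_nonempty_interior (by simp), Module.finrank_self, Nat.cast_one,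
    ENNReal.le_div_iff_mul_le (by simp [hd0.ne']) (by simp), one_mul] at this
  exact this

lemma dimH_range_cantorSum (hr0 : 0 ≤ r) (hr : r < 1 / 2) {d : ℝ≥0} (hd : r ^ (d : ℝ) = 2⁻¹) :
    dimH (range (cantorSum r)) = d :=
  (dimH_range_cantorSum_le hr0 (by linarith) hd).antisymm (le_dimH_range_cantorSum hr0 hr hd)

lemma volume_range_cantorSum_add_self (hr0 : 0 ≤ r) (hr : r < 1 / 4) :
    volume (range (cantorSum r) + range (cantorSum r)) = 0 := by
  set c := r / (1 - r)
  have hc : 0 ≤ c := div_nonneg hr0 (by linarith)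
  have hbound : ∀ n : ℕ, volume (range (cantorSum r) + range (cantorSum r)) ≤
      ENNReal.ofReal ((4 * r) ^ n * (2 * c)) := by
    intro n
    obtain ⟨x, hx⟩ := range_cantorSum_subset_iUnion_Icc hr0 (by linarith) n
    have hcover : range (cantorSum r) + range (cantorSum r) ⊆
        ⋃ p : (Fin n → Fin 2) × (Fin n → Fin 2),
          Icc (x p.1 + x p.2) (x p.1 + x p.2 + 2 * (r ^ n * c)) := by
      rintro _ ⟨_, hu, _, hv, rfl⟩
      obtain ⟨w, hw⟩ := mem_iUnion.1 (hx hu)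
      obtain ⟨v, hv⟩ := mem_iUnion.1 (hx hv)
      exact mem_iUnion.2 ⟨(w, v), by constructor <;> linarith [hw.1, hw.2, hv.1, hv.2]⟩
    calc _ ≤ _ := measure_mono hcover
      _ ≤ _ := measure_iUnion_fintype_le _ _
      _ = ENNReal.ofReal ((4 * r) ^ n * (2 * c)) := by
        simp only [Real.volume_Icc, add_sub_cancel_left, Finset.sum_const, Finset.card_univ,
          Fintype.card_prod, Fintype.card_fun, Fintype.card_fin, nsmul_eq_mul]
        rw [← ENNReal.ofReal_natCast, ← ENNReal.ofReal_mul (by positivity)]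
        congr 1
        rw [mul_pow, show (4 : ℝ) = 2 * 2 by norm_num, mul_pow]
        push_cast
        ring
  have htend : Tendsto (fun n : ℕ ↦ ENNReal.ofReal ((4 * r) ^ n * (2 * c))) atTop (𝓝 0) := by
    rw [← ENNReal.ofReal_zero]
    refine ENNReal.tendsto_ofReal ?_
    simpa using
      (tendsto_pow_atTop_nhds_zero_of_lt_one (by positivity) (by linarith)).mul_const (2 * c)
  exact nonpos_iff_eq_zero.1 (ge_of_tendsto' htend hbound)

lemma mul_cantorSum_eq_cantorSum_sq_add (hr0 : 0 ≤ r) (hr1 : r < 1) (a : ℕ → Fin 2) :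
    r * cantorSum r a =
      cantorSum (r ^ 2) (fun k ↦ a (2 * k)) + r * cantorSum (r ^ 2) (fun k ↦ a (2 * k + 1)) := by
  set f : ℕ → ℝ := fun n ↦ (a n : ℝ) * r ^ (n + 1)
  have hs : Summable f := summable_cantorSum hr0 hr1 a
  have hsplit := tsum_even_add_odd (hs.comp_injective (mul_right_injective₀ two_ne_zero))
    (hs.comp_injective fun i j (h : 2 * i + 1 = 2 * j + 1) ↦ by omega)
  rw [cantorSum, ← hsplit, mul_add, cantorSum, cantorSum, ← tsum_mul_left, ← tsum_mul_left,
    ← tsum_mul_left]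
  congr 1 <;> exact tsum_congr fun k ↦ by simp only [f]; ring

lemma ofDigits_eq_cantorSum (a : ℕ → Fin 2) : Real.ofDigits a = cantorSum 2⁻¹ a :=
  tsum_congr fun n ↦ by simp [Real.ofDigitsTerm, inv_pow]

end

lemma Icc_subset_range_cantorSum_add_two_smul :
    Icc (0 : ℝ) 1 ⊆ range (cantorSum 4⁻¹) + (2 : ℝ) • range (cantorSum 4⁻¹) := by
  intro x hx
  obtain ⟨a, -, rfl⟩ := Real.ofDigits_SurjOn (b := 2) one_lt_two hx
  have := mul_cantorSum_eq_cantorSum_sq_add (r := 2⁻¹) (by norm_num) (by norm_num) a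
  rw [show (2⁻¹ : ℝ) ^ 2 = 4⁻¹ by norm_num] at this
  refine ⟨cantorSum 4⁻¹ (fun k ↦ a (2 * k + 1)), mem_range_self _,
    (2 : ℝ) • cantorSum 4⁻¹ (fun k ↦ a (2 * k)), smul_mem_smul_set (mem_range_self _), ?_⟩
  rw [ofDigits_eq_cantorSum, smul_eq_mul]
  linarith

lemma exists_dimH_le_half_Icc_subset_add_self :
    ∃ E ⊆ Icc (0 : ℝ) 1, dimH E ≤ ENNReal.ofReal (1 / 2) ∧ Icc 0 1 ⊆ E + E := by
  set C := range (cantorSum 4⁻¹)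
  have hC : C ⊆ Icc 0 3⁻¹ := range_subset_iff.2 fun a ↦ by
    simpa [show (4⁻¹ : ℝ) / (1 - 4⁻¹) = 3⁻¹ by norm_num] using
      cantorSum_mem_Icc (r := 4⁻¹) (by norm_num) (by norm_num) a
  have hdim : dimH C ≤ ENNReal.ofReal (1 / 2) :=
    dimH_range_cantorSum_le (by norm_num) (by norm_num) <| by
      rw [Real.coe_toNNReal _ (by norm_num), show (4⁻¹ : ℝ) = 2⁻¹ ^ (2 : ℝ) by norm_num,
        ← Real.rpow_mul (by norm_num)]
      norm_num
  refine ⟨C ∪ (2 : ℝ) • C, union_subset (hC.trans ?_) ?_, ?_, ?_⟩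
  · exact Icc_subset_Icc le_rfl (by norm_num)
  · rintro _ ⟨y, hy, rfl⟩
    have := hC hy
    constructor <;> simp only [smul_eq_mul] <;> linarith [this.1, this.2]
  · rw [dimH_union, ← image_smul]
    exact max_le hdim (((lipschitzWith_smul (2 : ℝ)).dimH_image_le C).trans hdim)
  · exact Icc_subset_range_cantorSum_add_two_smul.trans
      (add_subset_add subset_union_left subset_union_right)

lemma exists_subset_Icc_dimH_eq_and_null_add_self {h : ℝ} (h0 : 0 ≤ h) (h1 : h ≤ 1) :
    ∃ F ⊆ Icc (0 : ℝ) 1, dimH F = ENNReal.ofReal h ∧ (h < 1 / 2 → volume (F + F) = 0) := by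
  rcases h0.eq_or_lt with rfl | h0
  · exact ⟨{0}, by simp, by simp, fun _ ↦ by simp⟩
  rcases h1.eq_or_lt with rfl | h1
  · refine ⟨Icc 0 1, subset_rfl, ?_, fun h ↦ by norm_num at h⟩
    rw [Real.dimH_of_nonempty_interior (by simp)]
    simp
  set r : ℝ := 2 ^ (-h⁻¹)
  have hr0 : 0 ≤ r := by positivity
  have hr_lt {s : ℝ} (hs : s < h⁻¹) : r < 2 ^ (-s) :=
    Real.rpow_lt_rpow_of_exponent_lt one_lt_two (by linarith)
  have hr : r < 1 / 2 := by
    simpa [Real.rpow_neg_one] using hr_lt (s := 1) (one_lt_inv₀ h0 |>.2 h1)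
  have hd : r ^ ((h.toNNReal : ℝ)) = 2⁻¹ := by
    rw [Real.coe_toNNReal _ h0.le, ← Real.rpow_mul zero_le_two, neg_mul, inv_mul_cancel₀ h0.ne',
      Real.rpow_neg_one]
  refine ⟨range (cantorSum r), range_subset_iff.2 fun a ↦ ?_, dimH_range_cantorSum hr0 hr hd,
    fun hh ↦ volume_range_cantorSum_add_self hr0 ?_⟩
  · have ha := cantorSum_mem_Icc hr0 (by linarith) a
    exact ⟨ha.1, ha.2.trans ((div_le_one (by linarith)).2 (by linarith))⟩
  · have := hr_lt (s := 2) (by rw [lt_inv_comm₀ two_pos h0]; linarith)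
    norm_num at this
    linarith

/-- For every `h ∈ [0,1]` there is a set `E ⊆ [0,1]` of Hausdorff dimension `h` such that
`E + E` has positive Lebesgue measure iff `h ∈ [1/2, 1]`. -/
theorem exists_dimH_with_sumset_measure_iff (h : ℝ) (hh : h ∈ Set.Icc (0 : ℝ) 1) :
    ∃ E : Set ℝ, E ⊆ Set.Icc 0 1 ∧ dimH E = ENNReal.ofReal h ∧
      (0 < volume (E + E) ↔ 1 / 2 ≤ h) := by
  obtain ⟨F, hF, hFdim, hFnull⟩ := exists_subset_Icc_dimH_eq_and_null_add_self hh.1 hh.2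
  rcases lt_or_ge h (1 / 2) with hsmall | hbig
  · exact ⟨F, hF, hFdim, iff_of_false (by simp [hFnull hsmall]) hsmall.not_ge⟩
  obtain ⟨E₀, hE₀, hE₀dim, hE₀add⟩ := exists_dimH_le_half_Icc_subset_add_self
  refine ⟨E₀ ∪ F, union_subset hE₀ hF, ?_, iff_of_true ?_ hbig⟩
  · rw [dimH_union, hFdim, max_eq_right (hE₀dim.trans (ENNReal.ofReal_le_ofReal hbig))]
  · calc (0 : ℝ≥0∞) < volume (Icc (0 : ℝ) 1) := by simp
      _ ≤ volume ((E₀ ∪ F) + (E₀ ∪ F)) :=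
        measure_mono (hE₀add.trans (add_subset_add subset_union_left subset_union_left))
end

section
/- Let n ≥ 1 and let 𝒜 be a family of zero sets of nonzero polynomials in n real variables with |𝒜| strictly less than the cardinality of the continuum. Then the union ⋃_{A ∈ 𝒜} A has n-dimensional inner Lebesgue measure zero. -/
/-!
By Fubini, a measurable set in `ℝⁿ⁺¹` whose slices `x₀ = t` are null for all `t` outside a set of
fewer than continuum many values is null: a set of reals of positive measure contains a Cantor
set. A nonzero polynomial vanishes identically on only finitely many hyperplanes `x₀ = t`, so
off fewer than continuum many values of `t` every polynomial of the family restricts to a nonzero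
polynomial on the slice, and induction on the dimension applies.
-/

open MeasureTheory Cardinal

universe u v

theorem Cardinal.mk_iUnion_lt_continuum_of_finite {α : Type u} {ι : Type v} {f : ι → Set α}
    (hι : #ι < 𝔠) (hf : ∀ i, (f i).Finite) : #(⋃ i, f i) < 𝔠 := by
  have hsup : ⨆ i, lift.{v} #(f i) < 𝔠 :=
    (ciSup_le' fun i => (lift_lt_aleph0.2 (hf i).lt_aleph0).le).trans_lt aleph0_lt_continuum
  exact lift_lt_continuum.1 <| (mk_iUnion_le_lift f).trans_lt <|
    mul_lt_of_lt aleph0_le_continuum (lift_lt_continuum.2 hι) hsup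

theorem MeasurableSet.continuum_le_mk_of_measure_ne_zero {α : Type*} [TopologicalSpace α]
    [PolishSpace α] [MeasurableSpace α] {μ : Measure α} [μ.InnerRegular]
    [NullSingletonClass μ] {S : Set α} (hS : MeasurableSet S) (hμS : μ S ≠ 0) : 𝔠 ≤ #S := by
  obtain ⟨K, hKS, hK, hμK⟩ := hS.exists_lt_isCompact (pos_iff_ne_zero.2 hμS)
  have hKunc : ¬K.Countable := fun hc => hμK.ne' (hc.measure_zero μ)
  obtain ⟨f, hfK, -, hf⟩ := hK.isClosed.exists_nat_bool_injection_of_not_countable hKunc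
  have hinj : Function.Injective fun x => (⟨f x, hKS (hfK ⟨x, rfl⟩)⟩ : S) :=
    fun x y hxy => hf (congrArg Subtype.val hxy)
  simpa [mk_arrow] using lift_mk_le_lift_mk_of_injective hinj

theorem MeasureTheory.Measure.prod_null_of_mk_lt_continuum {α β : Type*} [TopologicalSpace α]
    [PolishSpace α] [MeasurableSpace α] [MeasurableSpace β] {μ : Measure α} [μ.InnerRegular]
    [NullSingletonClass μ] [SFinite μ] {ν : Measure β} [SFinite ν] {G : Set (α × β)}
    (hG : MeasurableSet G) {B : Set α} (hB : #B < 𝔠) (hslice : ∀ t ∉ B, ν (Prod.mk t ⁻¹' G) = 0) :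
    μ.prod ν G = 0 := by
  rw [Measure.measure_prod_null hG]
  set N := {t | ν (Prod.mk t ⁻¹' G) ≠ 0}
  have hNB : N ⊆ B := fun t ht => by_contra fun htB => ht (hslice t htB)
  have hN : MeasurableSet N :=
    measurable_measure_prodMk_left hG (MeasurableSet.singleton 0).compl
  have hμN : μ N = 0 := by_contra fun hμN =>
    ((hN.continuum_le_mk_of_measure_ne_zero hμN).trans (mk_le_mk_of_subset hNB)).not_gt hB
  exact measure_eq_zero_iff_ae_notMem.1 hμN |>.mono fun t ht => not_not.1 ht

namespace MvPolynomial

variable {R : Type*} [CommRing R] {n : ℕ}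

noncomputable def sliceAt (t : R) (P : MvPolynomial (Fin (n + 1)) R) : MvPolynomial (Fin n) R :=
  (finSuccEquiv R n P).eval (C t)

theorem eval_sliceAt (t : R) (P : MvPolynomial (Fin (n + 1)) R) (y : Fin n → R) :
    eval y (sliceAt t P) = eval (Fin.cons t y) P := by
  rw [sliceAt, eval_eq_eval_mv_eval', Polynomial.eval_map, ← Polynomial.eval₂_hom, eval_C]

theorem finite_setOf_sliceAt_eq_zero [IsDomain R] {P : MvPolynomial (Fin (n + 1)) R}
    (hP : P ≠ 0) : {t : R | sliceAt t P = 0}.Finite :=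
  (Polynomial.finite_setOfPred_isRoot ((finSuccEquiv R n).map_ne_zero_iff.2 hP)).preimage
    (C_injective (Fin n) R).injOn

end MvPolynomial

open MvPolynomial in
theorem volume_eq_zero_of_subset_iUnion_zeroSet {ι : Type*} (hι : #ι < 𝔠) {n : ℕ}
    (P : ι → MvPolynomial (Fin n) ℝ) (hP : ∀ i, P i ≠ 0) {F : Set (Fin n → ℝ)}
    (hF : MeasurableSet F) (hFP : F ⊆ ⋃ i, {x | eval x (P i) = 0}) : volume F = 0 := by
  induction n with
  | zero =>
    have hzero : ∀ i x, eval x (P i) ≠ 0 := fun i x => by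
      obtain ⟨r, hr⟩ := C_surjective (Fin 0) (P i)
      rw [← hr, eval_C]
      rintro rfl
      exact hP i (by rw [← hr, C_0])
    suffices F = ∅ by simp [this]
    refine Set.eq_empty_of_forall_notMem fun x hx => ?_
    obtain ⟨i, hi⟩ := Set.mem_iUnion.1 (hFP hx)
    exact hzero i x hi
  | succ n ih =>
    set e := MeasurableEquiv.piFinSuccAbove (fun _ : Fin (n + 1) => ℝ) 0
    have hcons : ∀ t y, e.symm (t, y) = Fin.cons t y := fun t y => by
      rw [MeasurableEquiv.piFinSuccAbove_symm_apply]
      exact Fin.insertNth_zero' t y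
    rw [← (volume_preserving_piFinSuccAbove (fun _ : Fin (n + 1) => ℝ) 0).symm.measure_preimage
      hF.nullMeasurableSet]
    refine Measure.prod_null_of_mk_lt_continuum (hF.preimage e.symm.measurable)
      (mk_iUnion_lt_continuum_of_finite hι fun i => finite_setOf_sliceAt_eq_zero (hP i))
      fun t ht => ?_
    simp only [Set.mem_iUnion, Set.mem_ofPred_eq, not_exists] at ht
    refine ih (fun i => sliceAt t (P i)) ht
      ((hF.preimage e.symm.measurable).preimage measurable_prodMk_left) fun y hy => ?_
    rw [Set.mem_preimage, Set.mem_preimage, hcons] at hy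
    simpa only [Set.mem_iUnion, Set.mem_ofPred_eq, eval_sliceAt] using hFP hy

theorem inner_measure_union_algebraic_zero_general
    (n : ℕ) (𝒜 : Set (Set (Fin n → ℝ)))
    (h𝒜 : ∀ A ∈ 𝒜, ∃ P : MvPolynomial (Fin n) ℝ, P ≠ 0 ∧
        A = {x : Fin n → ℝ | MvPolynomial.eval x P = 0})
    (hcard : Cardinal.mk 𝒜 < Cardinal.continuum) :
    (⨆ (F : Set (Fin n → ℝ)) (_ : IsClosed F ∧ F ⊆ ⋃₀ 𝒜), volume F) = 0 := by
  choose P hP hPA using h𝒜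
  refine ENNReal.iSup_eq_zero.2 fun F => ENNReal.iSup_eq_zero.2 fun ⟨hF, hF𝒜⟩ => ?_
  refine volume_eq_zero_of_subset_iUnion_zeroSet hcard (fun A : 𝒜 => P A A.2)
    (fun A => hP A A.2) hF.measurableSet fun x hx => ?_
  obtain ⟨A, hA, hxA⟩ := hF𝒜 hx
  rw [hPA A hA] at hxA
  exact Set.mem_iUnion.2 ⟨⟨A, hA⟩, hxA⟩

/-- A union of fewer than continuum many zero sets of nonzero polynomials in `n` real
variables has `n`-dimensional inner Lebesgue measure zero. -/
theorem inner_measure_union_algebraic_zero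
    (n : ℕ) (hn : 1 ≤ n) (𝒜 : Set (Set (Fin n → ℝ)))
    (h𝒜 : ∀ A ∈ 𝒜, ∃ P : MvPolynomial (Fin n) ℝ, P ≠ 0 ∧
        A = {x : Fin n → ℝ | MvPolynomial.eval x P = 0})
    (hcard : Cardinal.mk 𝒜 < Cardinal.continuum) :
    (⨆ (F : Set (Fin n → ℝ)) (_ : IsClosed F ∧ F ⊆ ⋃₀ 𝒜), volume F) = 0 :=
  inner_measure_union_algebraic_zero_general n 𝒜 h𝒜 hcard
end

section
/- There is no independent subset E of ℝ/ℤ (no non-trivial integer linear relations among its elements) such that the n-fold sumset n·E = E + E + ⋯ + E equals all of ℝ/ℤ for some positive integer n. -/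
open Finset

/-!
Pick `e ∈ E` of infinite order; one exists because an irrational point is a sum of elements of
`E`, and sums of torsion elements are torsion. Writing `(n + 1) • e = f₁ + ⋯ + fₙ` with `fᵢ ∈ E`
gives an integer relation among elements of `E`. Independence forces the coefficients attached to
`e` to cancel, since `e` has infinite order, so `n + 1` equals the number of `i` with `fᵢ = e`,
which is at most `n`.
-/

variable {G : Type*} [AddCommGroup G]

lemma exists_not_isOfFinAddOrder_of_sum {ι : Type*} {s : Finset ι} {f : ι → G}
    (h : ¬ IsOfFinAddOrder (∑ i ∈ s, f i)) : ∃ i ∈ s, ¬ IsOfFinAddOrder (f i) := by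
  by_contra! hf
  exact h (sum_mem (S := AddCommMonoid.addTorsion G) hf)

lemma UnitAddCircle.not_isOfFinAddOrder_coe_sqrt_two :
    ¬ IsOfFinAddOrder ((√2 : ℝ) : UnitAddCircle) :=
  AddCircle.not_isOfFinAddOrder_iff_forall_rat_ne_div.mpr fun q => by
    simpa using (irrational_sqrt_two.ne_rat q).symm

namespace IndependentSet

variable [DecidableEq G] {K : Set G}

lemma sum_filter_eq_zero (hK : IndependentSet K) {n : ℕ} {m : Fin n → ℤ} {x : Fin n → G}
    (hx : ∀ i, x i ∈ K) (hsum : ∑ i, m i • x i = 0) {e : G} (he : ¬ IsOfFinAddOrder e) :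
    ∑ i with x i = e, m i = 0 := by
  obtain ⟨p, hp, hclass⟩ := hK n m x hx hsum
  rw [← sum_fiberwise (g := p)]
  refine sum_eq_zero fun k _ => ?_
  by_cases hk : ∃ i, p i = k ∧ x i = e
  · obtain ⟨i, rfl, hi⟩ := hk
    have hfibre : ({j | x j = e} : Finset (Fin n)).filter (p · = p i) =
        ({j | p j = p i} : Finset (Fin n)) := by
      ext j
      simpa using fun hj => (hp j i hj).trans hi
    have hclass_i := hclass (p i)
    rw [sum_congr rfl fun j hj => by rw [hp j i (mem_filter.1 hj).2, hi], ← sum_smul] at hclass_i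
    rw [hfibre]
    exact injective_zsmul_iff_not_isOfFinAddOrder.mpr he (hclass_i.trans (zero_zsmul e).symm)
  · refine sum_eq_zero fun j hj => absurd ?_ hk
    simp only [mem_filter, mem_univ, true_and] at hj
    exact ⟨j, hj.2, hj.1⟩

lemma card_filter_eq_of_sum_eq_nsmul (hK : IndependentSet K) {e : G} (heK : e ∈ K)
    (he : ¬ IsOfFinAddOrder e) {n : ℕ} {f : Fin n → G} (hfK : ∀ i, f i ∈ K) {c : ℕ}
    (hsum : ∑ i, f i = c • e) : #{i | f i = e} = c := by
  let x : Fin (n + 1) → G := Fin.cons e f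
  let m : Fin (n + 1) → ℤ := Fin.cons (c : ℤ) (-1)
  have hrel : ∑ i, m i • x i = 0 := by simp [x, m, Fin.sum_univ_succ, hsum]
  have hcoeff := hK.sum_filter_eq_zero (x := x) (Fin.cases heK hfK) hrel he
  rw [sum_filter, Fin.sum_univ_succ] at hcoeff
  simp only [x, m, Fin.cons_zero, Fin.cons_succ, if_true, Pi.neg_apply, Pi.one_apply] at hcoeff
  rw [← sum_filter, sum_const, smul_neg, nsmul_one] at hcoeff
  omega

end IndependentSet

/-- No independent subset `E` of `ℝ/ℤ` satisfies `n·E = ℝ/ℤ` for a positive integer `n`. -/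
theorem no_independent_with_full_nfold_sumset :
    ¬ ∃ E : Set UnitAddCircle, IndependentSet E ∧ ∃ n : ℕ, 0 < n ∧
      ∀ x : UnitAddCircle, ∃ f : Fin n → UnitAddCircle,
        (∀ i, f i ∈ E) ∧ ∑ i, f i = x := by
  rintro ⟨E, hE, n, -, hcov⟩
  obtain ⟨e, heE, he⟩ : ∃ e ∈ E, ¬ IsOfFinAddOrder e := by
    obtain ⟨g, hgE, hg⟩ := hcov (√2 : ℝ)
    obtain ⟨i, -, hi⟩ := exists_not_isOfFinAddOrder_of_sum
      (hg ▸ UnitAddCircle.not_isOfFinAddOrder_coe_sqrt_two)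
    exact ⟨g i, hgE i, hi⟩
  obtain ⟨f, hfE, hf⟩ := hcov ((n + 1) • e)
  classical
  have hcard := hE.card_filter_eq_of_sum_eq_nsmul heE he hfE hf
  have := (card_filter_le univ fun i => f i = e).trans_eq (card_fin n)
  omega
end
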